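/- arXiv:math/0612428 — 7 statements merged into one kernel-verified Lean document; each statement's English description precedes it below -/
import Mathlib

section
/- Let g : V → ℝ satisfy g(ξ) ≥ 1 for all ξ ∈ V, ∫_V 1/g(ξ) dξ < ∞, and suppose there is a constant C₀ such that sup_{y ∈ ξ+F} 1/g(y) ≤ C₀ · inf_{y ∈ ξ+F} 1/g(y) for every ξ ∈ Λ. Then there exists a constant C, independent of f, such that for every continuously differentiable f : V → ℂ one has ∑_{ξ∈Λ} |f(ξ)| ≤ C · ( ∫_V |f(ξ)| dξ + ∑_{i=1}^n sup_{ξ∈V} g(ξ)·‖∇_i f(ξ)‖ ), the inequality being read in [0,∞]. -/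
/-!
Bounding each partial derivative by the corresponding supremum gives
`‖Df(z)‖ ≤ c S / g(z)`, where `S = ∑ᵢ sup g ‖∇ᵢ f‖` and `c` depends only on the decomposition.
Comparing `f(ξ)` with its average over `ξ + F ⊆ B(ξ, R)` by the mean value theorem costs
`R · sup_{B(ξ,R)} ‖Df‖`. As the translates of `F` cover `V` up to a null set and `Df` is
continuous, this supremum is controlled by the suprema of `1/g` over the boundedly many translates
`ξ' + F` with `‖ξ' - ξ‖ ≤ 2R`, and by the hypothesis on `C₀` each of those is at most `C₀` times
the average of `1/g` over `ξ' + F`; summing over the lattice leaves `C₀ ∫ 1/g / vol F`.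
-/

open MeasureTheory Metric Pointwise
open scoped RealInnerProductSpace ENNReal NNReal

theorem DirectSum.IsInternal.exists_enorm_le_mul_sum_enorm_comp_subtypeL
    {𝕜 E G ι : Type*} [NontriviallyNormedField 𝕜] [CompleteSpace 𝕜]
    [NormedAddCommGroup E] [NormedSpace 𝕜 E] [FiniteDimensional 𝕜 E]
    [NormedAddCommGroup G] [NormedSpace 𝕜 G] [Fintype ι] [DecidableEq ι]
    {W : ι → Submodule 𝕜 E} (hW : DirectSum.IsInternal W) :
    ∃ c : ℝ≥0, ∀ L : E →L[𝕜] G, ‖L‖ₑ ≤ c * ∑ i, ‖L.comp (W i).subtypeL‖ₑ := by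
  let e := LinearEquiv.ofBijective (DirectSum.coeLinearMap W) hW
  let P (i : ι) : E →L[𝕜] W i := LinearMap.toContinuousLinearMap
    ((DirectSum.component 𝕜 ι (fun i => W i) i).comp e.symm.toLinearMap)
  have hP (v : E) : ∑ i, (P i v : E) = v := calc
    _ = DirectSum.coeLinearMap W (e.symm v) := by
      conv_rhs => rw [← DirectSum.sum_univ_of (e.symm v)]
      simp only [P, LinearMap.coe_toContinuousLinearMap', LinearMap.coe_comp, LinearEquiv.coe_coe,
        Function.comp_apply, map_sum, DirectSum.coeLinearMap_of]
      rfl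
    _ = v := e.apply_symm_apply v
  refine ⟨∑ i, ‖P i‖₊, fun L => ?_⟩
  have hPc (i : ι) : ‖P i‖ ≤ ∑ j, ‖P j‖ :=
    Finset.single_le_sum (f := fun j => ‖P j‖) (fun _ _ => norm_nonneg _) (Finset.mem_univ i)
  have hL : ‖L‖ ≤ (∑ i, ‖P i‖) * ∑ i, ‖L.comp (W i).subtypeL‖ := by
    refine L.opNorm_le_bound (by positivity) fun v => ?_
    calc ‖L v‖ = ‖∑ i, L.comp (W i).subtypeL (P i v)‖ := by simp [← map_sum, hP]
      _ ≤ ∑ i, ‖L.comp (W i).subtypeL‖ * (‖P i‖ * ‖v‖) :=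
        (norm_sum_le _ _).trans <| Finset.sum_le_sum fun i _ =>
          (ContinuousLinearMap.le_opNorm _ _).trans <| by gcongr; exact (P i).le_opNorm v
      _ ≤ ∑ i, ‖L.comp (W i).subtypeL‖ * ((∑ j, ‖P j‖) * ‖v‖) := by gcongr; exact hPc _
      _ = _ := by rw [← Finset.sum_mul]; ring
  simp only [enorm_eq_nnnorm]
  rw [← ENNReal.ofNNReal_finsetSum, ← ENNReal.coe_mul, ENNReal.coe_le_coe, ← NNReal.coe_le_coe]
  push_cast
  exact hL

theorem Convex.enorm_image_sub_le_of_enorm_fderiv_le {E G : Type*}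
    [NormedAddCommGroup E] [NormedSpace ℝ E] [NormedAddCommGroup G] [NormedSpace ℝ G]
    {f : E → G} {s : Set E} {K : ℝ≥0∞} (hs : Convex ℝ s)
    (hf : ∀ x ∈ s, DifferentiableAt ℝ f x) (bound : ∀ x ∈ s, ‖fderiv ℝ f x‖ₑ ≤ K)
    {x y : E} (hx : x ∈ s) (hy : y ∈ s) : ‖f y - f x‖ₑ ≤ K * edist y x := by
  rcases eq_or_ne K ⊤ with rfl | hK
  · rcases eq_or_ne y x with rfl | hyx
    · simp
    · simp [ENNReal.top_mul (edist_pos.2 hyx).ne']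
  have hlip := hs.lipschitzOnWith_of_nnnorm_fderiv_le (C := K.toNNReal) hf fun z hz => by
    rw [← ENNReal.coe_le_coe, ENNReal.coe_toNNReal hK, ← enorm_eq_nnnorm]
    exact bound z hz
  simpa [edist_eq_enorm_sub, ENNReal.coe_toNNReal hK] using hlip hy hx

theorem le_setLIntegral_div_add {α : Type*} [MeasurableSpace α] {μ : Measure α} {s : Set α}
    (hs : NullMeasurableSet s μ) (hμs₀ : μ s ≠ 0) (hμs : μ s ≠ ⊤) {φ : α → ℝ≥0∞}
    {a c : ℝ≥0∞} (h : ∀ y ∈ s, a ≤ φ y + c) : a ≤ (∫⁻ y in s, φ y ∂μ) / μ s + c := by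
  have hint : a * μ s ≤ (∫⁻ y in s, φ y ∂μ) + c * μ s := calc
    a * μ s = ∫⁻ _ in s, a ∂μ := by rw [setLIntegral_const]
    _ ≤ ∫⁻ y in s, (φ y + c) ∂μ := lintegral_mono_ae ((ae_restrict_mem₀ hs).mono h)
    _ = (∫⁻ y in s, φ y ∂μ) + c * μ s := by
      rw [lintegral_add_right _ measurable_const, setLIntegral_const]
  rwa [← ENNReal.mul_div_cancel_right hμs₀ hμs (a := c), ← ENNReal.add_div,
    ENNReal.le_div_iff_mul_le (.inl hμs₀) (.inl hμs)]

theorem MeasureTheory.IsAddFundamentalDomain.tsum_iSup_vadd_le {G α : Type*} [AddGroup G]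
    [AddAction G α] [MeasurableSpace α] [Countable G] [MeasurableConstVAdd G α] {μ : Measure α}
    [VAddInvariantMeasure G α μ] {s : Set α} (hs : IsAddFundamentalDomain G s μ)
    (hμs₀ : μ s ≠ 0) (hμs : μ s ≠ ⊤) {w : α → ℝ≥0∞} {c : ℝ≥0}
    (hw : ∀ g : G, ∀ y ∈ g +ᵥ s, ∀ z ∈ g +ᵥ s, w y ≤ c * w z) :
    ∑' g : G, ⨆ y ∈ g +ᵥ s, w y ≤ c * (∫⁻ x, w x ∂μ) / μ s := by
  have hg (g : G) : ⨆ y ∈ g +ᵥ s, w y ≤ c * (∫⁻ z in g +ᵥ s, w z ∂μ) / μ s := by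
    have := le_setLIntegral_div_add (hs.nullMeasurableSet_vadd g)
      (by rwa [measure_vadd]) (by rwa [measure_vadd]) (φ := fun z => c * w z) (c := 0)
      fun z hz => by rw [add_zero]; exact iSup₂_le fun y hy => hw g y hy z hz
    rwa [add_zero, lintegral_const_mul' _ _ ENNReal.coe_ne_top, measure_vadd] at this
  calc ∑' g : G, ⨆ y ∈ g +ᵥ s, w y ≤ ∑' g : G, c * (∫⁻ z in g +ᵥ s, w z ∂μ) / μ s :=
        ENNReal.tsum_le_tsum hg
    _ = c * (∫⁻ x, w x ∂μ) / μ s := by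
      simp only [div_eq_mul_inv, ENNReal.tsum_mul_right, ENNReal.tsum_mul_left,
        ← hs.lintegral_eq_tsum]

theorem IsOpen.subset_of_ae_imp_mem {X : Type*} [TopologicalSpace X] [MeasurableSpace X]
    {μ : Measure X} [μ.IsOpenPosMeasure] {U P : Set X} (hU : IsOpen U) (hP : IsClosed P)
    (h : ∀ᵐ x ∂μ, x ∈ U → x ∈ P) : U ⊆ P := by
  have hnull : μ (U \ P) = 0 :=
    measure_eq_zero_iff_ae_notMem.2 (h.mono fun x hx hxUP => hxUP.2 (hx hxUP.1))
  exact Set.sdiff_eq_empty.1 (((hU.sdiff hP).measure_eq_zero_iff μ).1 hnull)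

namespace Submodule

variable {E : Type*} [NormedAddCommGroup E] (Λ : Submodule ℤ E)

noncomputable def closedBallCount (r : ℝ) : ℝ≥0∞ :=
  ∑' η : Λ, if ‖(η : E)‖ ≤ r then 1 else 0

noncomputable def closedBallSum (r : ℝ) (b : Λ → ℝ≥0∞) (ξ : Λ) : ℝ≥0∞ :=
  ∑' ξ' : Λ, if ‖(ξ' : E) - ξ‖ ≤ r then b ξ' else 0

theorem closedBallCount_ne_top [ProperSpace E] [DiscreteTopology Λ] (r : ℝ) :
    Λ.closedBallCount r ≠ ⊤ := by
  have hΛ : IsClosed (Λ : Set E) := AddSubgroup.isClosed_of_discrete (H := Λ.toAddSubgroup)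
  have hfin : {η : Λ | ‖(η : E)‖ ≤ r}.Finite := by
    refine ((finite_isBounded_inter_isClosed DiscreteTopology.isDiscrete
      (isBounded_closedBall (x := 0) (r := r)) hΛ).preimage Subtype.coe_injective.injOn).subset ?_
    intro η hη
    exact ⟨mem_closedBall_zero_iff.2 hη, η.2⟩
  rw [closedBallCount, tsum_eq_sum (s := hfin.toFinset) fun η hη => by simpa using hη]
  exact ENNReal.sum_ne_top.2 fun η _ => by split_ifs <;> simp

theorem le_closedBallSum {r : ℝ} (b : Λ → ℝ≥0∞) {ξ ξ' : Λ} (h : ‖(ξ' : E) - ξ‖ ≤ r) :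
    b ξ' ≤ Λ.closedBallSum r b ξ := by
  have := ENNReal.le_tsum (f := fun ξ' : Λ => if ‖(ξ' : E) - ξ‖ ≤ r then b ξ' else 0) ξ'
  rwa [if_pos h] at this

theorem tsum_closedBallSum (r : ℝ) (b : Λ → ℝ≥0∞) :
    ∑' ξ, Λ.closedBallSum r b ξ = Λ.closedBallCount r * ∑' ξ, b ξ := by
  unfold closedBallSum
  rw [ENNReal.tsum_comm, ← ENNReal.tsum_mul_left]
  refine tsum_congr fun ξ' => ?_
  calc ∑' ξ : Λ, (if ‖(ξ' : E) - ξ‖ ≤ r then b ξ' else 0)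
      = ∑' ξ : Λ, b ξ' * if ‖((ξ - ξ' : Λ) : E)‖ ≤ r then 1 else 0 := by
        refine tsum_congr fun ξ => ?_
        rw [AddSubgroupClass.coe_sub, norm_sub_rev]
        split_ifs <;> simp
    _ = Λ.closedBallCount r * b ξ' := by
      rw [ENNReal.tsum_mul_left, mul_comm]
      exact congrArg (· * b ξ') ((Equiv.subRight ξ').tsum_eq fun η : Λ =>
        if ‖(η : E)‖ ≤ r then 1 else 0)

end Submodule

instance Submodule.vaddInvariantMeasure {V : Type*} [AddCommGroup V] [MeasurableSpace V]
    (Λ : Submodule ℤ V) (μ : Measure V) [μ.IsAddLeftInvariant] : VAddInvariantMeasure Λ V μ :=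
  inferInstanceAs (VAddInvariantMeasure Λ.toAddSubgroup V μ)

section LatticeTranslates

variable {V G : Type*} [NormedAddCommGroup V] [NormedSpace ℝ V] [MeasurableSpace V]
  {μ : Measure V} [μ.IsAddHaarMeasure] {Λ : Submodule ℤ V} {F : Set V} {R : ℝ}
  [NormedAddCommGroup G] [NormedSpace ℝ G] {f : V → G} {K : ℝ≥0∞} {w : V → ℝ≥0∞}

theorem MeasureTheory.IsAddFundamentalDomain.enorm_fderiv_le_of_mem_ball
    (hF : IsAddFundamentalDomain Λ F μ) (hFR : F ⊆ ball 0 R) (hf : ContDiff ℝ 1 f)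
    (hfw : ∀ z, ‖fderiv ℝ f z‖ₑ ≤ K * w z) (ξ : Λ) {z : V} (hz : z ∈ ball (ξ : V) R) :
    ‖fderiv ℝ f z‖ₑ ≤ K * Λ.closedBallSum (2 * R) (fun ξ' => ⨆ y ∈ ξ' +ᵥ F, w y) ξ := by
  refine isOpen_ball.subset_of_ae_imp_mem (μ := μ) (P := {z | ‖fderiv ℝ f z‖ₑ ≤ _})
    (isClosed_le (hf.continuous_fderiv one_ne_zero).enorm continuous_const) ?_ hz
  filter_upwards [hF.ae_covers] with x ⟨η, hη⟩ hx
  have hxF : x ∈ (-η) +ᵥ F := Set.mem_vadd_set_iff_neg_vadd_mem.2 (by simpa using hη)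
  have hnear : ‖((-η : Λ) : V) - ξ‖ ≤ 2 * R := by
    have hηx : ‖(η : V) + x‖ < R := by simpa [Submodule.vadd_def] using hFR hη
    have hxξ : ‖x - ξ‖ < R := by simpa [dist_eq_norm] using hx
    calc ‖((-η : Λ) : V) - ξ‖ = ‖(x - ξ) - ((η : V) + x)‖ := by push_cast; congr 1; abel
      _ ≤ ‖x - ξ‖ + ‖(η : V) + x‖ := norm_sub_le _ _
      _ ≤ 2 * R := by linarith
  calc ‖fderiv ℝ f x‖ₑ ≤ K * w x := hfw x
    _ ≤ K * _ := by
      gcongr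
      exact (le_iSup₂ (f := fun y (_ : y ∈ (-η) +ᵥ F) => w y) x hxF).trans
        (Λ.le_closedBallSum _ hnear)

theorem MeasureTheory.IsAddFundamentalDomain.enorm_apply_le_setLIntegral_div_add [BorelSpace V]
    (hF : IsAddFundamentalDomain Λ F μ)
    (hFR : F ⊆ ball 0 R) (hμF₀ : μ F ≠ 0) (hμF : μ F ≠ ⊤) (hf : ContDiff ℝ 1 f)
    (hfw : ∀ z, ‖fderiv ℝ f z‖ₑ ≤ K * w z) (ξ : Λ) :
    ‖f ξ‖ₑ ≤ (∫⁻ y in ξ +ᵥ F, ‖f y‖ₑ ∂μ) / μ F +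
      K * (Λ.closedBallSum (2 * R) (fun ξ' => ⨆ y ∈ ξ' +ᵥ F, w y) ξ) *
        ENNReal.ofReal R := by
  rw [← measure_vadd μ ξ F] at hμF₀ hμF ⊢
  refine le_setLIntegral_div_add (hF.nullMeasurableSet_vadd ξ) hμF₀ hμF fun y hy => ?_
  have hyξ : y ∈ ball (ξ : V) R := by
    obtain ⟨u, hu, rfl⟩ := hy
    simpa [Submodule.vadd_def] using hFR hu
  have hξ : (ξ : V) ∈ ball (ξ : V) R := mem_ball_self (pos_of_mem_ball hyξ)
  calc ‖f ξ‖ₑ = ‖f y + (f ξ - f y)‖ₑ := by rw [add_sub_cancel]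
    _ ≤ ‖f y‖ₑ + ‖f ξ - f y‖ₑ := enorm_add_le _ _
    _ ≤ ‖f y‖ₑ + K * (Λ.closedBallSum (2 * R) (fun ξ' => ⨆ y ∈ ξ' +ᵥ F, w y) ξ) *
        edist (ξ : V) y := by
      gcongr
      exact (convex_ball _ _).enorm_image_sub_le_of_enorm_fderiv_le
        (fun x _ => hf.differentiable one_ne_zero x)
        (fun z hz => hF.enorm_fderiv_le_of_mem_ball hFR hf hfw ξ hz) hyξ hξ
    _ ≤ _ := by
      gcongr
      rw [edist_dist, dist_comm]
      exact ENNReal.ofReal_le_ofReal (mem_ball.1 hyξ).le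

theorem MeasureTheory.IsAddFundamentalDomain.tsum_enorm_apply_le [BorelSpace V] [Countable Λ]
    (hF : IsAddFundamentalDomain Λ F μ) (hFR : F ⊆ ball 0 R) (hμF₀ : μ F ≠ 0) (hμF : μ F ≠ ⊤)
    (hf : ContDiff ℝ 1 f) (hfw : ∀ z, ‖fderiv ℝ f z‖ₑ ≤ K * w z) :
    ∑' ξ : Λ, ‖f ξ‖ₑ ≤ (∫⁻ y, ‖f y‖ₑ ∂μ) / μ F +
      K * (ENNReal.ofReal R * Λ.closedBallCount (2 * R) * ∑' ξ : Λ, ⨆ y ∈ ξ +ᵥ F, w y) := by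
  calc ∑' ξ : Λ, ‖f ξ‖ₑ ≤ ∑' ξ : Λ, ((∫⁻ y in ξ +ᵥ F, ‖f y‖ₑ ∂μ) / μ F +
        K * (Λ.closedBallSum (2 * R) (fun ξ' => ⨆ y ∈ ξ' +ᵥ F, w y) ξ) *
          ENNReal.ofReal R) :=
        ENNReal.tsum_le_tsum (hF.enorm_apply_le_setLIntegral_div_add hFR hμF₀ hμF hf hfw)
    _ = _ := by
      simp only [ENNReal.tsum_add, div_eq_mul_inv, ENNReal.tsum_mul_right, ENNReal.tsum_mul_left,
        ← hF.lintegral_eq_tsum, Submodule.tsum_closedBallSum]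
      ring

end LatticeTranslates

theorem enorm_le_iSup_ofReal_mul_mul_ofReal_one_div {X E : Type*} [SeminormedAddGroup E]
    (u : X → E) {g : X → ℝ} {x : X} (hx : 0 < g x) :
    ‖u x‖ₑ ≤ (⨆ y, ENNReal.ofReal (g y * ‖u y‖)) * ENNReal.ofReal (1 / g x) := calc
  ‖u x‖ₑ = ENNReal.ofReal (g x * ‖u x‖ * (1 / g x)) := by
    rw [mul_comm (g x), mul_assoc, mul_one_div_cancel hx.ne', mul_one, ofReal_norm]
  _ = ENNReal.ofReal (g x * ‖u x‖) * ENNReal.ofReal (1 / g x) := ENNReal.ofReal_mul (by positivity)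
  _ ≤ _ := by gcongr; exact le_iSup (fun y => ENNReal.ofReal (g y * ‖u y‖)) x

theorem enorm_fderiv_le_mul_sum_iSup_mul {V G ι : Type*} [NormedAddCommGroup V]
    [NormedSpace ℝ V] [NormedAddCommGroup G] [NormedSpace ℝ G] [Fintype ι]
    {W : ι → Submodule ℝ V} {c : ℝ≥0}
    (hc : ∀ L : V →L[ℝ] G, ‖L‖ₑ ≤ c * ∑ i, ‖L.comp (W i).subtypeL‖ₑ) (f : V → G) {g : V → ℝ}
    (hg : ∀ z, 0 < g z) (z : V) :
    ‖fderiv ℝ f z‖ₑ ≤ c * (∑ i, ⨆ ξ, ENNReal.ofReal (g ξ * ‖(fderiv ℝ f ξ).comp (W i).subtypeL‖)) *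
      ENNReal.ofReal (1 / g z) := calc
  ‖fderiv ℝ f z‖ₑ ≤ c * ∑ i, ‖(fderiv ℝ f z).comp (W i).subtypeL‖ₑ := hc _
  _ ≤ _ := by
    rw [mul_assoc, Finset.sum_mul]
    gcongr with i
    exact enorm_le_iSup_ofReal_mul_mul_ofReal_one_div
      (fun z => (fderiv ℝ f z).comp (W i).subtypeL) (hg z)

theorem stmt0_general {n : ℕ} {V : Type*} [NormedAddCommGroup V] [InnerProductSpace ℝ V]
    [FiniteDimensional ℝ V] [MeasurableSpace V] [BorelSpace V]
    (μ : Measure V) [μ.IsAddHaarMeasure]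
    (W : Fin n → Submodule ℝ V)
    (hW : DirectSum.IsInternal W)
    (Λ : Submodule ℤ V) (hΛdisc : DiscreteTopology Λ)
    (F : Set V) (hFfund : IsAddFundamentalDomain Λ F μ)
    (hFbdd : Bornology.IsBounded F)
    (g : V → ℝ) (hg1 : ∀ ξ, 1 ≤ g ξ)
    (hgint : ∫⁻ ξ, ENNReal.ofReal (1 / g ξ) ∂μ < ⊤)
    (C₀ : ℝ)
    (hC₀ : ∀ ξ ∈ Λ, ∀ y ∈ ξ +ᵥ F, ∀ z ∈ ξ +ᵥ F, 1 / g y ≤ C₀ * (1 / g z)) :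
    ∃ C : ℝ≥0, ∀ f : V → ℂ, ContDiff ℝ 1 f →
      ∑' ξ : Λ, (‖f (ξ : V)‖₊ : ℝ≥0∞) ≤
        C * (∫⁻ ξ, (‖f ξ‖₊ : ℝ≥0∞) ∂μ +
          ∑ i : Fin n, ⨆ ξ : V,
            ENNReal.ofReal (g ξ * ‖(fderiv ℝ f ξ).comp (W i).subtypeL‖)) := by
  have : Countable Λ := TopologicalSpace.separableSpace_iff_countable.1 inferInstance
  obtain ⟨R, hFR⟩ := hFbdd.subset_ball 0
  obtain ⟨c, hc⟩ := hW.exists_enorm_le_mul_sum_enorm_comp_subtypeL (G := ℂ)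
  have hμF₀ : μ F ≠ 0 := hFfund.measure_ne_zero (NeZero.ne μ)
  have hμF : μ F ≠ ⊤ := hFbdd.measure_lt_top.ne
  set w : V → ℝ≥0∞ := fun y => ENNReal.ofReal (1 / g y)
  set N := Λ.closedBallCount (2 * R)
  have hN : N ≠ ⊤ := Λ.closedBallCount_ne_top (2 * R)
  set M : ℝ≥0∞ := C₀.toNNReal * (∫⁻ y, w y ∂μ) / μ F
  have hM : ∑' ξ : Λ, ⨆ y ∈ ξ +ᵥ F, w y ≤ M :=
    hFfund.tsum_iSup_vadd_le hμF₀ hμF fun ξ y hy z hz =>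
      (ENNReal.ofReal_le_ofReal (hC₀ ξ ξ.2 y hy z hz)).trans_eq
        (ENNReal.ofReal_mul' (one_div_nonneg.2 (zero_le_one.trans (hg1 z))))
  set A : ℝ≥0∞ := (μ F)⁻¹
  set B : ℝ≥0∞ := c * (ENNReal.ofReal R * N * M)
  have hAB : A + B ≠ ⊤ := by finiteness
  refine ⟨(A + B).toNNReal, fun f hf => ?_⟩
  set S := ∑ i : Fin n, ⨆ ξ : V, ENNReal.ofReal (g ξ * ‖(fderiv ℝ f ξ).comp (W i).subtypeL‖)
  have hfw := enorm_fderiv_le_mul_sum_iSup_mul hc f fun z => zero_lt_one.trans_le (hg1 z)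
  simp only [← enorm_eq_nnnorm, ENNReal.coe_toNNReal hAB]
  set I := ∫⁻ y, ‖f y‖ₑ ∂μ
  calc ∑' ξ : Λ, ‖f ξ‖ₑ
      ≤ I / μ F + c * S * (ENNReal.ofReal R * N * ∑' ξ : Λ, ⨆ y ∈ ξ +ᵥ F, w y) :=
        hFfund.tsum_enorm_apply_le hFR hμF₀ hμF hf hfw
    _ ≤ A * I + c * S * (ENNReal.ofReal R * N * M) := by rw [ENNReal.div_eq_inv_mul]; gcongr
    _ = A * I + B * S := by ring
    _ ≤ (A + B) * (I + S) := (le_self_add (b := A * S + B * I)).trans_eq (by ring)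

/-- Let `V = V₁ ⊕ … ⊕ V_n` be an orthogonal direct sum of finite-dimensional real inner
product spaces (realized here as pairwise orthogonal subspaces `W i` forming an internal direct
sum of `V`), `Λ` a lattice in `V`, and `F` a bounded measurable fundamental domain for `Λ`
containing `0`.  Let `g : V → ℝ` satisfy `g ≥ 1`, `∫_V 1/g < ∞`, and suppose `1/g` is
multiplicatively bounded on every translate `ξ + F`, `ξ ∈ Λ`, with a uniform constant `C₀`.
Then there is a constant `C`, independent of `f`, such that for every continuously
differentiable `f : V → ℂ`,
`∑_{ξ∈Λ} |f(ξ)| ≤ C·(∫_V |f| + ∑ᵢ sup_{ξ∈V} g(ξ)·‖∇ᵢ f(ξ)‖)`, the inequality read in `[0,∞]`;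
here `∇ᵢ f(ξ)` is the Fréchet derivative of `f` at `ξ` restricted to the summand `W i`. -/
theorem stmt0 {n : ℕ} {V : Type*} [NormedAddCommGroup V] [InnerProductSpace ℝ V]
    [FiniteDimensional ℝ V] [MeasurableSpace V] [BorelSpace V]
    (μ : Measure V) [μ.IsAddHaarMeasure]
    (W : Fin n → Submodule ℝ V)
    (hW : DirectSum.IsInternal W)
    (hWorth : ∀ i j, i ≠ j → ∀ x ∈ W i, ∀ y ∈ W j, ⟪x, y⟫ = 0)
    (Λ : Submodule ℤ V) (hΛdisc : DiscreteTopology Λ) (hΛ : IsZLattice ℝ Λ)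
    (F : Set V) (hFfund : IsAddFundamentalDomain Λ F μ)
    (hFbdd : Bornology.IsBounded F) (hFmeas : MeasurableSet F) (hF0 : (0 : V) ∈ F)
    (g : V → ℝ) (hg1 : ∀ ξ, 1 ≤ g ξ)
    (hgint : ∫⁻ ξ, ENNReal.ofReal (1 / g ξ) ∂μ < ⊤)
    (C₀ : ℝ)
    (hC₀ : ∀ ξ ∈ Λ, ∀ y ∈ ξ +ᵥ F, ∀ z ∈ ξ +ᵥ F, 1 / g y ≤ C₀ * (1 / g z)) :
    ∃ C : ℝ≥0, ∀ f : V → ℂ, ContDiff ℝ 1 f →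
      ∑' ξ : Λ, (‖f (ξ : V)‖₊ : ℝ≥0∞) ≤
        C * (∫⁻ ξ, (‖f ξ‖₊ : ℝ≥0∞) ∂μ +
          ∑ i : Fin n, ⨆ ξ : V,
            ENNReal.ofReal (g ξ * ‖(fderiv ℝ f ξ).comp (W i).subtypeL‖)) :=
  stmt0_general μ W hW Λ hΛdisc F hFfund hFbdd g hg1 hgint C₀ hC₀
end

section
/- Let N be a norm on G and σ > 0 a real number such that ∫_G N(g)^{-σ} dμ(g) < ∞. Then for every discrete subgroup Γ of G, the sum ∑_{γ∈Γ} N(γ)^{-σ} is finite. -/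
/-!
Pick a neighbourhood `S` of `1` whose `Γ`-translates are pairwise disjoint (discreteness) and on
which `N ≤ C` (compactness). Submultiplicativity gives `C^{-σ} N(γ)^{-σ} ≤ N(γs)^{-σ}` for `s ∈ S`,
so integrating `N^{-σ}` over the disjoint translates `γS` yields
`C^{-σ} μ(S) ∑_γ N(γ)^{-σ} ≤ ∫_G N^{-σ} dμ < ∞`.
-/

open MeasureTheory Pointwise Topology Function
open scoped ENNReal

theorem Subgroup.exists_mem_nhds_one_pairwise_disjoint_smul {G : Type*} [Group G]
    [TopologicalSpace G] [IsTopologicalGroup G] (Γ : Subgroup G) [DiscreteTopology Γ] :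
    ∃ U ∈ 𝓝 (1 : G), Pairwise (Disjoint on fun γ : Γ => (γ : G) • U) := by
  obtain ⟨U, hU, -, hΓU⟩ := IsDiscrete.exists_nhds_eq_one_of_image_mulLeft_inter_nonempty Γ
    (isDiscrete_iff_discreteTopology.mpr ‹_›)
  refine ⟨U, hU, fun γ₁ γ₂ hne => Set.disjoint_left.mpr ?_⟩
  rintro _ ⟨u₁, hu₁, rfl⟩ ⟨u₂, hu₂, hu⟩
  refine hne (Subtype.ext (inv_mul_eq_one.mp ?_)).symm
  refine hΓU _ (Γ.mul_mem (Γ.inv_mem γ₂.2) γ₁.2) ⟨u₂, ⟨u₁, hu₁, ?_⟩, hu₂⟩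
  simp only [smul_eq_mul] at hu ⊢
  rw [mul_assoc, ← hu, inv_mul_cancel_left]

theorem tsum_mul_measure_le_lintegral_of_pairwise_disjoint_smul {G ι : Type*} [Group G]
    [MeasurableSpace G] [MeasurableMul G] (μ : Measure G) [μ.IsMulLeftInvariant]
    {S : Set G} (hS : MeasurableSet S) {x : ι → G} (hdisj : Pairwise (Disjoint on fun i => x i • S))
    {f : G → ℝ≥0∞} {c : ℝ≥0∞} (hf : ∀ i, ∀ g ∈ x i • S, c * f (x i) ≤ f g) :
    (∑' i, f (x i)) * (c * μ S) ≤ ∫⁻ g, f g ∂μ := by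
  rw [← ENNReal.tsum_mul_right, ENNReal.tsum_eq_iSup_sum]
  refine iSup_le fun F => ?_
  calc ∑ i ∈ F, f (x i) * (c * μ S)
      ≤ ∑ i ∈ F, ∫⁻ g in x i • S, f g ∂μ := by
        refine Finset.sum_le_sum fun i _ => ?_
        calc f (x i) * (c * μ S) = ∫⁻ _ in x i • S, c * f (x i) ∂μ := by
              rw [setLIntegral_const, measure_smul, mul_left_comm, mul_assoc]
          _ ≤ ∫⁻ g in x i • S, f g ∂μ := setLIntegral_mono' (hS.const_smul _) (hf i)
    _ = ∫⁻ g in ⋃ i ∈ F, x i • S, f g ∂μ :=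
        (lintegral_biUnion_finset (hdisj.set_pairwise _) (fun i _ => hS.const_smul _) f).symm
    _ ≤ ∫⁻ g, f g ∂μ := setLIntegral_le_lintegral _ _

theorem rpow_neg_mul_rpow_neg_le_of_submultiplicative {G : Type*} [Mul G] {N : G → ℝ}
    (hpos : ∀ g, 0 < N g) (hmul : ∀ g h, N (g * h) ≤ N g * N h) {σ : ℝ} (hσ : 0 ≤ σ) {C : ℝ}
    {h : G} (hh : N h ≤ C) (g : G) : C ^ (-σ) * N g ^ (-σ) ≤ N (g * h) ^ (-σ) := by
  have hC : 0 ≤ C := (hpos h).le.trans hh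
  calc C ^ (-σ) * N g ^ (-σ) = (N g * C) ^ (-σ) := by
        rw [mul_comm, Real.mul_rpow (hpos g).le hC]
    _ ≤ N (g * h) ^ (-σ) :=
        Real.rpow_le_rpow_of_nonpos (hpos _)
          ((hmul g h).trans (mul_le_mul_of_nonneg_left hh (hpos g).le)) (neg_nonpos.mpr hσ)

theorem stmt2_general {G : Type*} [Group G] [TopologicalSpace G] [IsTopologicalGroup G]
    [LocallyCompactSpace G]
    [MeasurableSpace G] [BorelSpace G]
    (μ : Measure G) [μ.IsHaarMeasure]
    (N : G → ℝ) (hNcont : Continuous N) (hN1 : ∀ g, 1 ≤ N g)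
    (hNmul : ∀ g h : G, N (g * h) ≤ N g * N h)
    (σ : ℝ) (hσ : 0 < σ)
    (hint : ∫⁻ g, ENNReal.ofReal (N g ^ (-σ)) ∂μ < ⊤)
    (Γ : Subgroup G) (hΓ : DiscreteTopology Γ) :
    Summable (fun γ : Γ => N (γ : G) ^ (-σ)) := by
  have hpos : ∀ g, 0 < N g := fun g => zero_lt_one.trans_le (hN1 g)
  obtain ⟨U, hU, hdisj⟩ := Γ.exists_mem_nhds_one_pairwise_disjoint_smul
  obtain ⟨K, hK, hK1⟩ := exists_compact_mem_nhds (1 : G)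
  obtain ⟨C, hC⟩ := hK.bddAbove_image hNcont.continuousOn
  have hCpos : 0 < C := (hpos 1).trans_le (hC ⟨1, mem_of_mem_nhds hK1, rfl⟩)
  set S := interior (U ∩ K)
  have hSU : S ⊆ U := interior_subset.trans Set.inter_subset_left
  have hSK : S ⊆ K := interior_subset.trans Set.inter_subset_right
  have hc : ENNReal.ofReal (C ^ (-σ)) * μ S ≠ 0 :=
    mul_ne_zero (ENNReal.ofReal_pos.mpr (Real.rpow_pos_of_pos hCpos _)).ne'
      (μ.measure_pos_of_mem_nhds (interior_mem_nhds.mpr (Filter.inter_mem hU hK1))).ne'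
  have hsum := tsum_mul_measure_le_lintegral_of_pairwise_disjoint_smul μ
    isOpen_interior.measurableSet (x := fun γ : Γ => (γ : G))
    (fun _ _ hne => (hdisj hne).mono (Set.smul_set_mono hSU) (Set.smul_set_mono hSU))
    (f := fun g => ENNReal.ofReal (N g ^ (-σ))) (c := ENNReal.ofReal (C ^ (-σ))) <| by
      rintro γ _ ⟨s, hs, rfl⟩
      rw [← ENNReal.ofReal_mul (Real.rpow_nonneg hCpos.le _)]
      exact ENNReal.ofReal_le_ofReal
        (rpow_neg_mul_rpow_neg_le_of_submultiplicative hpos hNmul hσ.le (hC ⟨s, hSK hs, rfl⟩) γ)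
  have htop : ∑' γ : Γ, ENNReal.ofReal (N γ ^ (-σ)) ≠ ⊤ := fun h => by
    rw [h, ENNReal.top_mul hc] at hsum
    exact hint.ne (top_le_iff.mp hsum)
  exact (ENNReal.summable_toReal htop).congr fun γ =>
    ENNReal.toReal_ofReal (Real.rpow_nonneg (hpos γ).le _)

/-- Let `G` be a locally compact Hausdorff second countable unimodular topological group with
Haar measure `μ`, and `N` a norm on `G` (continuous, `N ≥ 1`, symmetric under inversion,
submultiplicative).  If `σ > 0` is such that `∫_G N(g)^{-σ} dμ(g) < ∞`, then for every discrete
subgroup `Γ` of `G` the sum `∑_{γ∈Γ} N(γ)^{-σ}` is finite. -/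
theorem stmt2 {G : Type*} [Group G] [TopologicalSpace G] [IsTopologicalGroup G]
    [LocallyCompactSpace G] [T2Space G] [SecondCountableTopology G]
    [MeasurableSpace G] [BorelSpace G]
    (μ : Measure G) [μ.IsHaarMeasure] [μ.IsMulRightInvariant]
    (N : G → ℝ) (hNcont : Continuous N) (hN1 : ∀ g, 1 ≤ N g)
    (hNinv : ∀ g : G, N g⁻¹ = N g) (hNmul : ∀ g h : G, N (g * h) ≤ N g * N h)
    (σ : ℝ) (hσ : 0 < σ)
    (hint : ∫⁻ g, ENNReal.ofReal (N g ^ (-σ)) ∂μ < ⊤)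
    (Γ : Subgroup G) (hΓ : DiscreteTopology Γ) :
    Summable (fun γ : Γ => N (γ : G) ^ (-σ)) :=
  stmt2_general μ N hNcont hN1 hNmul σ hσ hint Γ hΓ
end

section
/- Let N be a norm on G, σ > 0 with ∫_G N(g)^{-σ} dμ(g) < ∞, Γ a discrete subgroup of G, H a closed subgroup of G, and Δ = H ∩ Γ. Suppose f : G → ℂ satisfies f(δg) = f(g) for all δ ∈ Δ and g ∈ G, and |f(g)| ≤ c·N_Δ(g)^{-σ} for some constant c and all g ∈ G. Then there is a constant C such that for every g ∈ G, ∑_{γ∈Δ\Γ} |f(γg)| ≤ C·( inf_{γ₀∈Γ} N(γ₀ g) )^σ; that is, the Poincaré series ∑_{γ∈Δ\Γ} f(γg) is of moderate growth modulo Γ. -/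
/-!
Pick a neighbourhood `U` of `1` on which `N` is bounded and whose translates by the discrete
group `Γ` are pairwise disjoint. Submultiplicativity makes `N(γ)^{-σ}` comparable to `N^{-σ}` on
`γU`, so `μ(U) ∑_{γ∈Γ} N(γ)^{-σ} ≲ ∫_G N^{-σ} < ∞`. For fixed `g`, choose `γ₁ ∈ Γ` with
`N(γ₁g)` close to `inf_{γ₀∈Γ} N(γ₀g)` and, for each coset `Δγ`, a `δ ∈ Δ` with `N(δγg)` close to
`N_Δ(γg)`. Then `γ ↦ δγγ₁⁻¹` is an injection `Δ\Γ → Γ` with `N(δγγ₁⁻¹) ≲ N_Δ(γg) N(γ₁g)`, so the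
Poincaré series is dominated by `N(γ₁g)^σ ∑_{γ∈Γ} N(γ)^{-σ}`.
-/

open MeasureTheory Pointwise Function

lemma rpow_neg_le_of_le_mul {a b t σ : ℝ} (ha : 0 < a) (ht : 0 < t) (hσ : 0 ≤ σ)
    (h : a ≤ t * b) : b ^ (-σ) ≤ t ^ σ * a ^ (-σ) := by
  have hab : a / t ≤ b := (div_le_iff₀' ht).2 h
  calc b ^ (-σ) ≤ (a / t) ^ (-σ) :=
        Real.rpow_le_rpow_of_nonpos (div_pos ha ht) hab (neg_nonpos.2 hσ)
    _ = t ^ σ * a ^ (-σ) := by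
        rw [Real.div_rpow ha.le ht.le, Real.rpow_neg ht.le, div_inv_eq_mul, mul_comm]

theorem QuotientGroup.injective_mul_out {Γ : Type*} [Group Γ] {Δ : Subgroup Γ}
    (δ : Quotient (QuotientGroup.rightRel Δ) → Δ) : Injective fun q => (δ q : Γ) * q.out := by
  intro q q' (h : (δ q : Γ) * q.out = δ q' * q'.out)
  rw [← Quotient.out_eq q, ← Quotient.out_eq q']
  apply Quotient.sound
  change QuotientGroup.rightRel Δ q.out q'.out
  rw [QuotientGroup.rightRel_apply]
  have h' : q'.out * q.out⁻¹ = (δ q' : Γ)⁻¹ * δ q := by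
    rw [eq_inv_mul_iff_mul_eq, ← mul_assoc, ← h, mul_inv_cancel_right]
  rw [h']
  exact Δ.mul_mem (Δ.inv_mem (δ q').2) (δ q).2

section DiscreteSubgroup

variable {G : Type*} [Group G] [TopologicalSpace G] [IsTopologicalGroup G]

theorem Subgroup.exists_isOpen_pairwise_disjoint_smul (Γ : Subgroup G) [DiscreteTopology Γ] :
    ∃ U : Set G, IsOpen U ∧ (1 : G) ∈ U ∧ Pairwise (Disjoint on fun γ : Γ => (γ : G) • U) := by
  obtain ⟨V, hVo, hVΓ⟩ :=
    discreteTopology_subtype_iff'.mp ‹DiscreteTopology Γ› (1 : G) Γ.one_mem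
  have h1V : (1 : G) ∈ V := (hVΓ.symm ▸ rfl : (1 : G) ∈ V ∩ Γ).1
  obtain ⟨W, hW, hWV⟩ := exists_nhds_split_inv (hVo.mem_nhds h1V)
  refine ⟨interior W, isOpen_interior, mem_interior_iff_mem_nhds.2 hW, ?_⟩
  intro γ γ' hne
  rw [onFun, Set.disjoint_left]
  rintro _ ⟨u, hu, rfl⟩ ⟨v, hv, hvu⟩
  have hquot : v / u = (γ' : G)⁻¹ * γ := by
    rw [div_eq_iff_eq_mul, mul_assoc, eq_inv_mul_iff_mul_eq]
    exact hvu
  have hone : v / u ∈ V ∩ Γ :=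
    ⟨hWV v (interior_subset hv) u (interior_subset hu),
      hquot ▸ Γ.mul_mem (Γ.inv_mem γ'.2) γ.2⟩
  rw [hVΓ, Set.mem_singleton_iff, div_eq_one] at hone
  subst hone
  exact hne (Subtype.ext (mul_right_cancel hvu).symm)

variable [MeasurableSpace G] [BorelSpace G]

theorem summable_rpow_neg_of_lintegral_lt_top (μ : Measure G) [μ.IsMulLeftInvariant]
    [μ.IsOpenPosMeasure] {N : G → ℝ} (hNcont : Continuous N) (hN1 : ∀ g, 1 ≤ N g)
    (hNmul : ∀ g h : G, N (g * h) ≤ N g * N h) {σ : ℝ} (hσ : 0 ≤ σ)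
    (hint : ∫⁻ g, ENNReal.ofReal (N g ^ (-σ)) ∂μ < ⊤) (Γ : Subgroup G) [DiscreteTopology Γ] :
    Summable fun γ : Γ => N γ ^ (-σ) := by
  have hNpos : ∀ g, 0 < N g := fun g => one_pos.trans_le (hN1 g)
  obtain ⟨U₀, hU₀, h1U₀, hdisj₀⟩ := Γ.exists_isOpen_pairwise_disjoint_smul
  set M := N 1 + 1
  have hM : 0 < M := by linarith [hN1 1]
  set U := U₀ ∩ {g | N g < M}
  have hUo : IsOpen U := hU₀.inter (isOpen_lt hNcont continuous_const)
  have hμU : μ U ≠ 0 := (hUo.measure_pos μ ⟨1, h1U₀, show N 1 < N 1 + 1 from lt_add_one _⟩).ne'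
  have hdisj : Pairwise (Disjoint on fun γ : Γ => (γ : G) • U) := fun _ _ h =>
    (hdisj₀ h).mono (Set.smul_set_mono Set.inter_subset_left)
      (Set.smul_set_mono Set.inter_subset_left)
  set F : G → ENNReal := fun g => ENNReal.ofReal (M ^ σ * N g ^ (-σ))
  have hlocal : ∀ γ : Γ,
      μ U * ENNReal.ofReal (N γ ^ (-σ)) ≤ μ.withDensity F ((γ : G) • U) := by
    intro γ
    have hmeas := (hUo.smul (γ : G)).measurableSet
    rw [withDensity_apply _ hmeas, ← measure_smul μ (γ : G) U, mul_comm, ← setLIntegral_const]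
    refine setLIntegral_mono' hmeas ?_
    rintro _ ⟨u, hu, rfl⟩
    refine ENNReal.ofReal_le_ofReal (rpow_neg_le_of_le_mul (hNpos _) hM hσ ?_)
    calc N ((γ : G) • u) ≤ N γ * N u := hNmul _ _
      _ ≤ M * N γ :=
          (mul_le_mul_of_nonneg_left (le_of_lt hu.2) (hNpos γ).le).trans_eq (mul_comm _ _)
  have hF : ∫⁻ g, F g ∂μ < ⊤ := by
    simp only [F, ENNReal.ofReal_mul (Real.rpow_nonneg hM.le σ)]
    rw [lintegral_const_mul' _ _ ENNReal.ofReal_ne_top]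
    exact ENNReal.mul_lt_top ENNReal.ofReal_lt_top hint
  have htsum : μ U * ∑' γ : Γ, ENNReal.ofReal (N γ ^ (-σ)) < ⊤ :=
    calc μ U * ∑' γ : Γ, ENNReal.ofReal (N γ ^ (-σ))
        = ∑' γ : Γ, μ U * ENNReal.ofReal (N γ ^ (-σ)) := ENNReal.tsum_mul_left.symm
      _ ≤ ∑' γ : Γ, μ.withDensity F ((γ : G) • U) := ENNReal.tsum_le_tsum hlocal
      _ ≤ μ.withDensity F (⋃ γ : Γ, (γ : G) • U) :=
          tsum_meas_le_meas_iUnion_of_disjoint _ (fun γ => (hUo.smul _).measurableSet) hdisj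
      _ ≤ μ.withDensity F Set.univ := measure_mono (Set.subset_univ _)
      _ = ∫⁻ g, F g ∂μ := by rw [withDensity_apply _ MeasurableSet.univ, Measure.restrict_univ]
      _ < ⊤ := hF
  have hfin : ∑' γ : Γ, ENNReal.ofReal (N γ ^ (-σ)) ≠ ⊤ := by
    intro htop
    rw [htop, ENNReal.mul_top hμU] at htsum
    exact lt_irrefl _ htsum
  refine (ENNReal.summable_toReal hfin).congr fun γ => ?_
  exact ENNReal.toReal_ofReal (Real.rpow_nonneg (hNpos γ).le _)

end DiscreteSubgroup

section RelativeNorm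

variable {G : Type*} [Group G] {N : G → ℝ}

noncomputable def relNorm (N : G → ℝ) (Δ : Subgroup G) (g : G) : ℝ :=
  ⨅ δ : Δ, N (δ * g)

lemma one_le_relNorm (hN1 : ∀ g, 1 ≤ N g) (Δ : Subgroup G) (g : G) : 1 ≤ relNorm N Δ g :=
  le_ciInf fun _ => hN1 _

lemma exists_lt_two_mul_relNorm (hN1 : ∀ g, 1 ≤ N g) (Δ : Subgroup G) (g : G) :
    ∃ δ : Δ, N (δ * g) < 2 * relNorm N Δ g :=
  exists_lt_of_ciInf_lt (lt_two_mul_self (one_pos.trans_le (one_le_relNorm hN1 Δ g)))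

theorem exists_injective_norm_le_relNorm (hN1 : ∀ g, 1 ≤ N g) (hNinv : ∀ g : G, N g⁻¹ = N g)
    (hNmul : ∀ g h : G, N (g * h) ≤ N g * N h) {Δ Γ : Subgroup G} (hΔΓ : Δ ≤ Γ) (g : G)
    (γ : Γ) :
    ∃ x : Quotient (QuotientGroup.rightRel (Δ.subgroupOf Γ)) → Γ, Injective x ∧
      ∀ q, N (x q) ≤ 2 * N (γ * g) * relNorm N Δ (q.out * g) := by
  choose δ hδ using fun q : Quotient (QuotientGroup.rightRel (Δ.subgroupOf Γ)) =>
    exists_lt_two_mul_relNorm hN1 Δ ((q.out : G) * g)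
  let δΓ q : Δ.subgroupOf Γ := ⟨⟨δ q, hΔΓ (δ q).2⟩, (δ q).2⟩
  refine ⟨fun q => (δΓ q : Γ) * q.out * γ⁻¹,
    (mul_left_injective γ⁻¹).comp (QuotientGroup.injective_mul_out δΓ), fun q => ?_⟩
  have hxq : (((δΓ q : Γ) * q.out * γ⁻¹ : Γ) : G) = (δ q * (q.out * g)) * ((γ : G) * g)⁻¹ := by
    simp only [δΓ, Subgroup.coe_mul, Subgroup.coe_inv]
    group
  rw [hxq]
  calc N ((δ q * (q.out * g)) * ((γ : G) * g)⁻¹)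
      ≤ N (δ q * (q.out * g)) * N ((γ : G) * g) := hNinv ((γ : G) * g) ▸ hNmul _ _
    _ ≤ 2 * relNorm N Δ (q.out * g) * N ((γ : G) * g) :=
        mul_le_mul_of_nonneg_right (hδ q).le (one_pos.trans_le (hN1 _)).le
    _ = 2 * N ((γ : G) * g) * relNorm N Δ (q.out * g) := by ring

theorem summable_norm_comp_out_mul_and_tsum_le {E : Type*} [SeminormedAddGroup E]
    (hN1 : ∀ g, 1 ≤ N g) (hNinv : ∀ g : G, N g⁻¹ = N g)
    (hNmul : ∀ g h : G, N (g * h) ≤ N g * N h) {σ : ℝ} (hσ : 0 ≤ σ) {Δ Γ : Subgroup G}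
    (hΔΓ : Δ ≤ Γ) (hS : Summable fun γ : Γ => N γ ^ (-σ)) {f : G → E} {c : ℝ}
    (hfbd : ∀ g, ‖f g‖ ≤ c * relNorm N Δ g ^ (-σ)) (g : G) (γ : Γ) {t : ℝ}
    (ht : N (γ * g) ≤ t) :
    Summable (fun q : Quotient (QuotientGroup.rightRel (Δ.subgroupOf Γ)) =>
        ‖f ((q.out : G) * g)‖) ∧
      ∑' q : Quotient (QuotientGroup.rightRel (Δ.subgroupOf Γ)), ‖f ((q.out : G) * g)‖ ≤
        c * (2 * t) ^ σ * ∑' γ : Γ, N γ ^ (-σ) := by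
  have hNpos : ∀ g, 0 < N g := fun g => one_pos.trans_le (hN1 g)
  have hc : 0 ≤ c := nonneg_of_mul_nonneg_left ((norm_nonneg _).trans (hfbd 1))
    (Real.rpow_pos_of_pos (one_pos.trans_le (one_le_relNorm hN1 Δ 1)) _)
  obtain ⟨x, hx, hxle⟩ := exists_injective_norm_le_relNorm hN1 hNinv hNmul hΔΓ g γ
  have h2t : 0 < 2 * t := by linarith [hNpos (γ * g)]
  set K := c * (2 * t) ^ σ
  have hbound : ∀ q, ‖f ((q.out : G) * g)‖ ≤ K * N (x q) ^ (-σ) := fun q =>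
    calc ‖f ((q.out : G) * g)‖ ≤ c * relNorm N Δ (q.out * g) ^ (-σ) := hfbd _
      _ ≤ c * ((2 * t) ^ σ * N (x q) ^ (-σ)) := by
          refine mul_le_mul_of_nonneg_left (rpow_neg_le_of_le_mul (hNpos _) h2t hσ ?_) hc
          have hrel := one_le_relNorm hN1 Δ (q.out * g)
          calc N (x q) ≤ 2 * N (γ * g) * relNorm N Δ (q.out * g) := hxle q
            _ ≤ 2 * t * relNorm N Δ (q.out * g) := by gcongr
      _ = K * N (x q) ^ (-σ) := (mul_assoc _ _ _).symm
  have hSx : Summable fun q => N (x q) ^ (-σ) := hS.comp_injective hx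
  have hsum : Summable fun q => K * N (x q) ^ (-σ) := hSx.mul_left K
  have hsumf := hsum.of_nonneg_of_le (fun _ => norm_nonneg _) hbound
  refine ⟨hsumf, ?_⟩
  calc ∑' q : Quotient (QuotientGroup.rightRel (Δ.subgroupOf Γ)), ‖f ((q.out : G) * g)‖
        ≤ ∑' q, K * N (x q) ^ (-σ) :=
        hsumf.tsum_le_tsum hbound hsum
    _ = K * ∑' q, N (x q) ^ (-σ) := tsum_mul_left
    _ ≤ K * ∑' γ : Γ, N γ ^ (-σ) :=
        mul_le_mul_of_nonneg_left
          (hSx.tsum_le_tsum_of_inj x hx (fun γ _ => (Real.rpow_nonneg (hNpos γ).le _))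
            (fun _ => le_rfl) hS)
          (mul_nonneg hc (Real.rpow_nonneg h2t.le σ))

end RelativeNorm

theorem stmt4_general {G : Type*} [Group G] [TopologicalSpace G] [IsTopologicalGroup G]
    [MeasurableSpace G] [BorelSpace G]
    (μ : Measure G) [μ.IsHaarMeasure]
    (N : G → ℝ) (hNcont : Continuous N) (hN1 : ∀ g, 1 ≤ N g)
    (hNinv : ∀ g : G, N g⁻¹ = N g) (hNmul : ∀ g h : G, N (g * h) ≤ N g * N h)
    (σ : ℝ) (hσ : 0 < σ)
    (hint : ∫⁻ g, ENNReal.ofReal (N g ^ (-σ)) ∂μ < ⊤)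
    (Γ H : Subgroup G) (hΓ : DiscreteTopology Γ)
    (f : G → ℂ)
    (c : ℝ)
    (hfbd : ∀ g : G, ‖f g‖ ≤ c * (⨅ δ : ↥(H ⊓ Γ), N ((δ : G) * g)) ^ (-σ)) :
    ∃ C : ℝ, ∀ g : G,
      Summable (fun q : Quotient (QuotientGroup.rightRel ((H ⊓ Γ).subgroupOf Γ)) =>
        ‖f ((q.out : G) * g)‖) ∧
      ∑' q : Quotient (QuotientGroup.rightRel ((H ⊓ Γ).subgroupOf Γ)),
          ‖f ((q.out : G) * g)‖ ≤ C * (⨅ γ₀ : Γ, N ((γ₀ : G) * g)) ^ σ := by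
  have hS := summable_rpow_neg_of_lintegral_lt_top μ hNcont hN1 hNmul hσ.le hint Γ
  refine ⟨c * 4 ^ σ * ∑' γ : Γ, N γ ^ (-σ), fun g => ?_⟩
  obtain ⟨γ, hγ⟩ := exists_lt_two_mul_relNorm hN1 Γ g
  obtain ⟨hsum, hle⟩ := summable_norm_comp_out_mul_and_tsum_le hN1 hNinv hNmul hσ.le
    inf_le_right hS hfbd g γ hγ.le
  refine ⟨hsum, hle.trans_eq ?_⟩
  rw [← mul_assoc, show (2 : ℝ) * 2 = 4 by norm_num,
    Real.mul_rpow (by norm_num) (one_pos.trans_le (one_le_relNorm hN1 Γ g)).le, relNorm]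
  ring

/-- Let `G` be a locally compact Hausdorff second countable unimodular topological group with
Haar measure `μ`, `N` a norm on `G`, and `σ > 0` with `∫_G N(g)^{-σ} dμ(g) < ∞`.  Let `Γ` be a
discrete subgroup, `H` a closed subgroup, and `Δ = H ∩ Γ`.  If `f : G → ℂ` is left
`Δ`-invariant and `|f(g)| ≤ c·N_Δ(g)^{-σ}` where `N_Δ(g) = inf_{δ∈Δ} N(δg)`, then there is a
constant `C` such that for every `g ∈ G` the family `(f(γg))_{γ∈Δ\Γ}` is absolutely summable,
with `∑_{γ∈Δ\Γ} |f(γg)| ≤ C·(inf_{γ₀∈Γ} N(γ₀g))^σ`; that is, the Poincaré series is of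
moderate growth modulo `Γ`. -/
theorem stmt4 {G : Type*} [Group G] [TopologicalSpace G] [IsTopologicalGroup G]
    [LocallyCompactSpace G] [T2Space G] [SecondCountableTopology G]
    [MeasurableSpace G] [BorelSpace G]
    (μ : Measure G) [μ.IsHaarMeasure] [μ.IsMulRightInvariant]
    (N : G → ℝ) (hNcont : Continuous N) (hN1 : ∀ g, 1 ≤ N g)
    (hNinv : ∀ g : G, N g⁻¹ = N g) (hNmul : ∀ g h : G, N (g * h) ≤ N g * N h)
    (σ : ℝ) (hσ : 0 < σ)
    (hint : ∫⁻ g, ENNReal.ofReal (N g ^ (-σ)) ∂μ < ⊤)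
    (Γ H : Subgroup G) (hΓ : DiscreteTopology Γ) (hH : IsClosed (H : Set G))
    (f : G → ℂ)
    (hfinv : ∀ δ ∈ H ⊓ Γ, ∀ g : G, f (δ * g) = f g)
    (c : ℝ)
    (hfbd : ∀ g : G, ‖f g‖ ≤ c * (⨅ δ : ↥(H ⊓ Γ), N ((δ : G) * g)) ^ (-σ)) :
    ∃ C : ℝ, ∀ g : G,
      Summable (fun q : Quotient (QuotientGroup.rightRel ((H ⊓ Γ).subgroupOf Γ)) =>
        ‖f ((q.out : G) * g)‖) ∧
      ∑' q : Quotient (QuotientGroup.rightRel ((H ⊓ Γ).subgroupOf Γ)),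
          ‖f ((q.out : G) * g)‖ ≤ C * (⨅ γ₀ : Γ, N ((γ₀ : G) * g)) ^ σ :=
  stmt4_general μ N hNcont hN1 hNinv hNmul σ hσ hint Γ H hΓ f c hfbd
end

section
/- Let N be a norm on G, σ > 0 with ∫_G N(g)^{-σ} dμ(g) < ∞, Γ a discrete subgroup of G, H a closed subgroup of G, and Δ = H ∩ Γ. Suppose f : G → ℂ is continuous, satisfies f(δg) = f(g) for all δ ∈ Δ and g ∈ G, and |f(g)| ≤ c·N_Δ(g)^{-2σ} for some constant c and all g ∈ G. Then the Poincaré series P_f(g) = ∑_{γ∈Δ\Γ} f(γg) converges absolutely for every g ∈ G, and for every measurable fundamental domain D for the left action of Γ on G one has ∫_D |P_f(g)|² dμ(g) < ∞. -/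
/-!
Since `N ≥ 1`, the bound `N_Δ(x)^{-2σ} = sup_{δ ∈ Δ} N(δx)^{-2σ} ≤ ∑_{δ ∈ Δ} N(δx)^{-2σ}` together
with `Γ = Δ × (Δ\Γ)` gives `∑_{Δ\Γ} |f(γg)| ≤ c · ∑_{γ ∈ Γ} N(γg)^{-2σ}`.

The sum over `Γ` is bounded uniformly in `g`: take an open neighbourhood `W` of `1` with compact
closure on which `G → G/Γ` is injective. The right translates `Wγg` are then pairwise disjoint, all
of measure `μ W` by unimodularity, and `N ≤ C · N(γg)` on `Wγg` by submultiplicativity, so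
`μ W · ∑_γ N(γg)^{-2σ} ≤ C^{2σ} ∫_G N^{-2σ} ≤ C^{2σ} ∫_G N^{-σ}`.

Hence, with `K` this uniform bound, `|P_f(g)|² ≤ cK · c ∑_γ N(γg)^{-2σ}`, and integrating the
`Γ`-sum over a fundamental domain gives `∫_G N^{-2σ} < ∞`.
-/

open MeasureTheory Set Function Pointwise ENNReal

theorem Real.rpow_neg_le_rpow_mul_rpow_neg {a b C s : ℝ} (ha : 0 < a) (hb : 0 < b) (hC : 0 < C)
    (hs : 0 ≤ s) (h : b ≤ C * a) : a ^ (-s) ≤ C ^ s * b ^ (-s) :=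
  calc a ^ (-s) = C ^ s * (C * a) ^ (-s) := by
        rw [Real.mul_rpow hC.le ha.le, ← mul_assoc, ← Real.rpow_add hC, add_neg_cancel,
          Real.rpow_zero, one_mul]
    _ ≤ C ^ s * b ^ (-s) :=
        mul_le_mul_of_nonneg_left (Real.rpow_le_rpow_of_nonpos hb h (neg_nonpos.mpr hs))
          (Real.rpow_nonneg hC.le s)

theorem ENNReal.ofReal_iInf_rpow_neg {ι : Sort*} [Nonempty ι] {a : ι → ℝ} {b s : ℝ} (hb : 0 < b)
    (hab : ∀ i, b ≤ a i) (hs : 0 ≤ s) :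
    ENNReal.ofReal ((⨅ i, a i) ^ (-s)) = ⨆ i, ENNReal.ofReal (a i ^ (-s)) := by
  -- clamping at `b` makes the map antitone and continuous on all of `ℝ`
  have hpos : ∀ x, 0 < max x b := fun x => hb.trans_le (le_max_right x b)
  have hanti : Antitone fun x : ℝ => ENNReal.ofReal (max x b ^ (-s)) := fun x y hxy =>
    ENNReal.ofReal_le_ofReal <|
      Real.rpow_le_rpow_of_nonpos (hpos x) (max_le_max_right b hxy) (neg_nonpos.mpr hs)
  have hcont : Continuous fun x : ℝ => ENNReal.ofReal (max x b ^ (-s)) :=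
    ENNReal.continuous_ofReal.comp <|
      (continuous_id.max continuous_const).rpow_const fun x => Or.inl (hpos x).ne'
  have := hanti.map_ciInf_of_continuousAt hcont.continuousAt ⟨b, forall_mem_range.2 hab⟩
  simpa only [max_eq_left (le_ciInf hab), max_eq_left (hab _)] using this

theorem Subgroup.bijective_mul_out {G : Type*} [Group G] (H : Subgroup G) :
    Bijective fun p : H × Quotient (QuotientGroup.rightRel H) => (p.1 : G) * p.2.out :=
  (isComplement_range_right (f := Quotient.out) fun q => q.out_eq').comp
    (bijective_id.prodMap (rangeFactorization_bijective.mpr Quotient.out_injective))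

theorem ENNReal.tsum_eq_tsum_rightRel_tsum {G : Type*} [Group G] (H : Subgroup G) (a : G → ℝ≥0∞) :
    ∑' g, a g = ∑' q : Quotient (QuotientGroup.rightRel H), ∑' h : H, a (h * q.out) := by
  rw [← (Equiv.ofBijective _ H.bijective_mul_out).tsum_eq, ENNReal.tsum_prod', ENNReal.tsum_comm]
  rfl

theorem exists_isOpen_isCompact_closure_injOn_quotientMk {G : Type*} [Group G]
    [TopologicalSpace G] [IsTopologicalGroup G] [LocallyCompactSpace G]
    (Γ : Subgroup G) [DiscreteTopology Γ] :
    ∃ W : Set G, IsOpen W ∧ (1 : G) ∈ W ∧ IsCompact (closure W) ∧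
      InjOn (QuotientGroup.mk : G → G ⧸ Γ) W := by
  obtain ⟨V, hVopen, hV⟩ := isOpen_induced_iff.mp (isOpen_discrete ({1} : Set Γ))
  have hV1 : (1 : G) ∈ V := show (1 : Γ) ∈ Subtype.val ⁻¹' V by rw [hV]; rfl
  obtain ⟨U, hUopen, hU1, hUU⟩ := exists_open_nhds_one_mul_subset (hVopen.mem_nhds hV1)
  obtain ⟨O, hOopen, h1O, hOcpt⟩ :=
    exists_isOpen_superset_and_isCompact_closure (isCompact_singleton (x := (1 : G)))
  refine ⟨U ∩ U⁻¹ ∩ O, (hUopen.inter hUopen.inv).inter hOopen, ⟨⟨hU1, by simpa using hU1⟩, h1O rfl⟩,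
    hOcpt.of_isClosed_subset isClosed_closure (closure_mono inter_subset_right), ?_⟩
  rintro a ⟨⟨-, ha⟩, -⟩ b ⟨⟨hb, -⟩, -⟩ hab
  have hmem : (⟨a⁻¹ * b, QuotientGroup.eq.mp hab⟩ : Γ) ∈ Subtype.val ⁻¹' V :=
    hUU (mul_mem_mul ha hb)
  rw [hV] at hmem
  exact inv_mul_eq_one.mp (congrArg Subtype.val hmem)

theorem tsum_mul_measure_le_lintegral {G : Type*} [Group G] [MeasurableSpace G] [MeasurableMul G]
    (μ : Measure G) [μ.IsMulRightInvariant] {Γ : Subgroup G} [Countable Γ] {W : Set G}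
    (hW : MeasurableSet W) (hWΓ : InjOn (QuotientGroup.mk : G → G ⧸ Γ) W) {φ ψ : G → ℝ≥0∞}
    (hψ : Measurable ψ) (hφψ : ∀ w ∈ W, ∀ y, φ y ≤ ψ (w * y)) (g : G) :
    (∑' γ : Γ, φ (γ * g)) * μ W ≤ ∫⁻ x, ψ x ∂μ := by
  set A : Γ → Set G := fun γ => (· * ((γ : G) * g)⁻¹) ⁻¹' W
  have hA : ∀ γ, MeasurableSet (A γ) := fun γ => measurable_mul_const _ hW
  have hdisj : Pairwise (Disjoint on A) := by
    intro γ₁ γ₂ hne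
    refine disjoint_left.mpr fun x hx₁ hx₂ => hne ?_
    have hΓ : (x * ((γ₁ : G) * g)⁻¹)⁻¹ * (x * ((γ₂ : G) * g)⁻¹) = ((γ₁ * γ₂⁻¹ : Γ) : G) := by
      push_cast
      group
    have := hWΓ hx₁ hx₂ (QuotientGroup.eq.mpr (hΓ ▸ (γ₁ * γ₂⁻¹).2))
    simpa using this
  calc (∑' γ : Γ, φ (γ * g)) * μ W = ∑' γ : Γ, ∫⁻ _ in A γ, φ (γ * g) ∂μ := by
        simp only [setLIntegral_const, A, measure_preimage_mul_right, ENNReal.tsum_mul_right]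
    _ ≤ ∑' γ : Γ, ∫⁻ x in A γ, ψ x ∂μ :=
        ENNReal.tsum_le_tsum fun γ => setLIntegral_mono hψ fun x hx => by
          simpa [mul_assoc] using hφψ _ hx ((γ : G) * g)
    _ = ∫⁻ x in ⋃ γ, A γ, ψ x ∂μ := (lintegral_iUnion hA hdisj ψ).symm
    _ ≤ ∫⁻ x, ψ x ∂μ := setLIntegral_le_lintegral _ _

theorem MeasureTheory.IsFundamentalDomain.setLIntegral_tsum_smul {G α : Type*} [Group G]
    [MulAction G α] [MeasurableSpace α] {μ : Measure α} {s : Set α} [MeasurableConstSMul G α]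
    [SMulInvariantMeasure G α μ] [Countable G] (h : IsFundamentalDomain G s μ) {f : α → ℝ≥0∞}
    (hf : Measurable f) : ∫⁻ x in s, ∑' g : G, f (g • x) ∂μ = ∫⁻ x, f x ∂μ := by
  rw [lintegral_tsum (f := fun g x => f (g • x)) fun g =>
    (hf.comp (measurable_const_smul g)).aemeasurable, h.lintegral_eq_tsum'']

theorem tsum_enorm_le_ofReal_mul_tsum_rpow_neg {G E : Type*} [Group G] [SeminormedAddGroup E]
    {Γ H : Subgroup G} {N : G → ℝ} (hN1 : ∀ g, 1 ≤ N g) {s c : ℝ} (hs : 0 ≤ s) {F : G → E}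
    (hF : ∀ x, ‖F x‖ ≤ c * (⨅ δ : ↥(H ⊓ Γ), N (δ * x)) ^ (-s)) (g : G) :
    ∑' q : Quotient (QuotientGroup.rightRel ((H ⊓ Γ).subgroupOf Γ)), ‖F (q.out * g)‖ₑ ≤
      ENNReal.ofReal c * ∑' γ : Γ, ENNReal.ofReal (N (γ * g) ^ (-s)) := by
  have hpt : ∀ x, ‖F x‖ₑ ≤ ENNReal.ofReal c *
      ∑' δ : (H ⊓ Γ).subgroupOf Γ, ENNReal.ofReal (N (δ * x) ^ (-s)) := fun x =>
    calc ‖F x‖ₑ ≤ ENNReal.ofReal (c * (⨅ δ : ↥(H ⊓ Γ), N (δ * x)) ^ (-s)) := by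
          rw [← ofReal_norm]
          exact ENNReal.ofReal_le_ofReal (hF x)
      _ = ENNReal.ofReal c * ⨆ δ : ↥(H ⊓ Γ), ENNReal.ofReal (N (δ * x) ^ (-s)) := by
          rw [ENNReal.ofReal_mul' <|
              Real.rpow_nonneg (zero_le_one.trans (le_ciInf fun _ => hN1 _)) _,
            ENNReal.ofReal_iInf_rpow_neg one_pos (fun _ => hN1 _) hs]
      _ ≤ _ := by
          gcongr
          exact iSup_le fun δ =>
            ENNReal.le_tsum (f := fun δ : (H ⊓ Γ).subgroupOf Γ => ENNReal.ofReal (N (δ * x) ^ (-s)))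
              ((Subgroup.subgroupOfEquivOfLe inf_le_right).symm δ)
  calc _ ≤ ∑' q : Quotient (QuotientGroup.rightRel ((H ⊓ Γ).subgroupOf Γ)), ENNReal.ofReal c *
        ∑' δ : (H ⊓ Γ).subgroupOf Γ, ENNReal.ofReal (N (δ * (q.out * g)) ^ (-s)) :=
        ENNReal.tsum_le_tsum fun q => hpt _
    _ = _ := by
        rw [ENNReal.tsum_mul_left, ENNReal.tsum_eq_tsum_rightRel_tsum ((H ⊓ Γ).subgroupOf Γ)]
        simp [mul_assoc]

theorem exists_tsum_ofReal_rpow_neg_le {G : Type*} [Group G] [TopologicalSpace G]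
    [IsTopologicalGroup G] [LocallyCompactSpace G] [MeasurableSpace G] [BorelSpace G]
    (μ : Measure G) [μ.IsHaarMeasure] [μ.IsMulRightInvariant]
    (Γ : Subgroup G) [DiscreteTopology Γ] [Countable Γ] {N : G → ℝ} (hNcont : Continuous N)
    (hN1 : ∀ g, 1 ≤ N g) (hNmul : ∀ g h : G, N (g * h) ≤ N g * N h) {s : ℝ} (hs : 0 ≤ s)
    (hint : ∫⁻ g, ENNReal.ofReal (N g ^ (-s)) ∂μ < ⊤) :
    ∃ K < ⊤, ∀ g, ∑' γ : Γ, ENNReal.ofReal (N (γ * g) ^ (-s)) ≤ K := by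
  obtain ⟨W, hWopen, hW1, hWcpt, hWinj⟩ := exists_isOpen_isCompact_closure_injOn_quotientMk Γ
  obtain ⟨C, hC⟩ := hWcpt.exists_bound_of_continuousOn hNcont.continuousOn
  have hNC : ∀ w ∈ W, N w ≤ C := fun w hw => (le_abs_self _).trans (hC w (subset_closure hw))
  have hNpos : ∀ g, 0 < N g := fun g => zero_lt_one.trans_le (hN1 g)
  have hC0 : 0 < C := (hNpos 1).trans_le (hNC 1 hW1)
  have hmeas : Measurable fun x => ENNReal.ofReal (N x ^ (-s)) :=
    (hNcont.rpow_const fun x => Or.inl (hNpos x).ne').measurable.ennreal_ofReal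
  have hφψ : ∀ w ∈ W, ∀ y, ENNReal.ofReal (N y ^ (-s)) ≤
      ENNReal.ofReal (C ^ s) * ENNReal.ofReal (N (w * y) ^ (-s)) := by
    intro w hw y
    rw [← ENNReal.ofReal_mul (Real.rpow_nonneg hC0.le s)]
    refine ENNReal.ofReal_le_ofReal <|
      Real.rpow_neg_le_rpow_mul_rpow_neg (hNpos y) (hNpos _) hC0 hs ?_
    calc N (w * y) ≤ N w * N y := hNmul w y
      _ ≤ C * N y := mul_le_mul_of_nonneg_right (hNC w hw) (hNpos y).le
  have hμW : μ W ≠ 0 := (hWopen.measure_pos μ ⟨1, hW1⟩).ne'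
  have hμW' : μ W ≠ ⊤ := ((measure_mono subset_closure).trans_lt hWcpt.measure_lt_top).ne
  refine ⟨(ENNReal.ofReal (C ^ s) * ∫⁻ x, ENNReal.ofReal (N x ^ (-s)) ∂μ) / μ W,
    ENNReal.div_lt_top (mul_ne_top ofReal_ne_top hint.ne) hμW, fun g => ?_⟩
  rw [ENNReal.le_div_iff_mul_le (Or.inl hμW) (Or.inl hμW'), ← lintegral_const_mul _ hmeas]
  exact tsum_mul_measure_le_lintegral μ hWopen.measurableSet hWinj (measurable_const.mul hmeas)
    hφψ g

theorem stmt6_general {G : Type*} [Group G] [TopologicalSpace G] [IsTopologicalGroup G]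
    [LocallyCompactSpace G] [SecondCountableTopology G]
    [MeasurableSpace G] [BorelSpace G]
    (μ : Measure G) [μ.IsHaarMeasure] [μ.IsMulRightInvariant]
    (N : G → ℝ) (hNcont : Continuous N) (hN1 : ∀ g, 1 ≤ N g)
    (hNmul : ∀ g h : G, N (g * h) ≤ N g * N h)
    (σ : ℝ) (hσ : 0 < σ)
    (hint : ∫⁻ g, ENNReal.ofReal (N g ^ (-σ)) ∂μ < ⊤)
    (Γ H : Subgroup G) (hΓ : DiscreteTopology Γ)
    (f : G → ℂ)
    (c : ℝ)
    (hfbd : ∀ g : G, ‖f g‖ ≤ c * (⨅ δ : ↥(H ⊓ Γ), N ((δ : G) * g)) ^ (-(2 * σ))) :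
    (∀ g : G,
      Summable (fun q : Quotient (QuotientGroup.rightRel ((H ⊓ Γ).subgroupOf Γ)) =>
        ‖f ((q.out : G) * g)‖)) ∧
    ∀ D : Set G, MeasurableSet D → IsFundamentalDomain Γ D μ →
      ∫⁻ g in D,
          (‖∑' q : Quotient (QuotientGroup.rightRel ((H ⊓ Γ).subgroupOf Γ)),
              f ((q.out : G) * g)‖₊ : ENNReal) ^ 2 ∂μ < ⊤ := by
  have : Countable Γ := TopologicalSpace.separableSpace_iff_countable.mp inferInstance
  set φ : G → ℝ≥0∞ := fun x => ENNReal.ofReal (N x ^ (-(2 * σ)))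
  have hφmeas : Measurable φ :=
    (hNcont.rpow_const fun x => Or.inl (zero_lt_one.trans_le (hN1 x)).ne').measurable.ennreal_ofReal
  have hφint : ∫⁻ x, φ x ∂μ < ⊤ := (lintegral_mono fun x => ENNReal.ofReal_le_ofReal <|
    Real.rpow_le_rpow_of_exponent_le (hN1 x) (by linarith)).trans_lt hint
  obtain ⟨K, hK, hKbd⟩ := exists_tsum_ofReal_rpow_neg_le μ Γ hNcont hN1 hNmul (by positivity) hφint
  have hbd := tsum_enorm_le_ofReal_mul_tsum_rpow_neg hN1 (by positivity) hfbd
  have hbdK : ∀ g, ∑' q : Quotient (QuotientGroup.rightRel ((H ⊓ Γ).subgroupOf Γ)),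
      ‖f (q.out * g)‖ₑ ≤ ENNReal.ofReal c * K := fun g => (hbd g).trans (by gcongr; exact hKbd g)
  refine ⟨fun g => tsum_enorm_ne_top_iff_summable_norm.mp
    ((hbdK g).trans_lt (mul_lt_top ofReal_lt_top hK)).ne, fun D _ hD => ?_⟩
  calc _ ≤ ∫⁻ g in D, ENNReal.ofReal c * K * (ENNReal.ofReal c * ∑' γ : Γ, φ (γ • g)) ∂μ := by
        refine lintegral_mono fun g => ?_
        calc _ ≤ (∑' q : Quotient (QuotientGroup.rightRel ((H ⊓ Γ).subgroupOf Γ)),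
              ‖f (q.out * g)‖ₑ) ^ 2 := by gcongr; exact enorm_tsum_le_tsum_enorm
          _ ≤ _ := (sq _).trans_le (mul_le_mul' (hbdK g) (hbd g))
    _ = ENNReal.ofReal c * K * (ENNReal.ofReal c * ∫⁻ x, φ x ∂μ) := by
        rw [lintegral_const_mul' _ _ (mul_ne_top ofReal_ne_top hK.ne),
          lintegral_const_mul' _ _ ofReal_ne_top, hD.setLIntegral_tsum_smul hφmeas]
    _ < ⊤ := by finiteness

/-- Let `G` be a locally compact Hausdorff second countable unimodular topological group with
Haar measure `μ`, `N` a norm on `G`, and `σ > 0` with `∫_G N(g)^{-σ} dμ(g) < ∞`.  Let `Γ` be a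
discrete subgroup, `H` a closed subgroup, and `Δ = H ∩ Γ`.  If `f : G → ℂ` is continuous, left
`Δ`-invariant, and `|f(g)| ≤ c·N_Δ(g)^{-2σ}` with `N_Δ(g) = inf_{δ∈Δ} N(δg)`, then the
Poincaré series `P_f(g) = ∑_{γ∈Δ\Γ} f(γg)` converges absolutely for every `g`, and for every
measurable fundamental domain `D` for the left action of `Γ` on `G` one has
`∫_D |P_f(g)|² dμ(g) < ∞`. -/
theorem stmt6 {G : Type*} [Group G] [TopologicalSpace G] [IsTopologicalGroup G]
    [LocallyCompactSpace G] [T2Space G] [SecondCountableTopology G]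
    [MeasurableSpace G] [BorelSpace G]
    (μ : Measure G) [μ.IsHaarMeasure] [μ.IsMulRightInvariant]
    (N : G → ℝ) (hNcont : Continuous N) (hN1 : ∀ g, 1 ≤ N g)
    (hNinv : ∀ g : G, N g⁻¹ = N g) (hNmul : ∀ g h : G, N (g * h) ≤ N g * N h)
    (σ : ℝ) (hσ : 0 < σ)
    (hint : ∫⁻ g, ENNReal.ofReal (N g ^ (-σ)) ∂μ < ⊤)
    (Γ H : Subgroup G) (hΓ : DiscreteTopology Γ) (hH : IsClosed (H : Set G))
    (f : G → ℂ) (hfcont : Continuous f)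
    (hfinv : ∀ δ ∈ H ⊓ Γ, ∀ g : G, f (δ * g) = f g)
    (c : ℝ)
    (hfbd : ∀ g : G, ‖f g‖ ≤ c * (⨅ δ : ↥(H ⊓ Γ), N ((δ : G) * g)) ^ (-(2 * σ))) :
    (∀ g : G,
      Summable (fun q : Quotient (QuotientGroup.rightRel ((H ⊓ Γ).subgroupOf Γ)) =>
        ‖f ((q.out : G) * g)‖)) ∧
    ∀ D : Set G, MeasurableSet D → IsFundamentalDomain Γ D μ →
      ∫⁻ g in D,
          (‖∑' q : Quotient (QuotientGroup.rightRel ((H ⊓ Γ).subgroupOf Γ)),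
              f ((q.out : G) * g)‖₊ : ENNReal) ^ 2 ∂μ < ⊤ :=
  stmt6_general μ N hNcont hN1 hNmul σ hσ hint Γ H hΓ f c hfbd
end

section
/- For every real a ≠ 0 and every complex s with Re(s) > 1/2, the integral ∫_ℝ (1+x²)^{-s} e^{-2πiax} dx and the integral ∫_0^∞ e^{-π(t+1/t)|a|} t^{s-1/2} dt/t both converge absolutely, and ∫_ℝ (1+x²)^{-s} e^{-2πiax} dx = (π^s · |a|^{s-1/2} / Γ(s)) · ∫_0^∞ e^{-π(t+1/t)|a|} t^{s-1/2} dt/t. -/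
/-!
Since `Γ(s) (1 + x²)^{-s} = ∫_0^∞ u^{s-1} e^{-(1+x²)u} du`, the left-hand side times `Γ(s)` is a
double integral, absolutely convergent for `Re s > 1/2`. Integrating in `x` first turns
the inner integral into the Fourier transform of a Gaussian,
`∫ e^{-ux²} e^{-2πiax} dx = √(π/u) e^{-π²a²/u}`, leaving `√π ∫_0^∞ u^{s-3/2} e^{-u-π²a²/u} du`;
the substitution `u = π|a| t` gives the right-hand side.
-/

open Real MeasureTheory Set

lemma integral_gaussian_mul_cexp_neg_two_pi_mul_I {u : ℝ} (hu : 0 < u) (a : ℝ) :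
    ∫ x : ℝ, Complex.exp (-(u * x ^ 2 : ℝ)) * Complex.exp (-(2 * π * a * x : ℝ) * Complex.I) =
      (π : ℂ) ^ (1 / 2 : ℂ) * (u : ℂ) ^ (-(1 / 2) : ℂ) *
        Complex.exp (-(π ^ 2 * a ^ 2 / u : ℝ)) := by
  have h := fourierIntegral_gaussian (b := u) (by simpa using hu) (-2 * π * a)
  rw [Complex.div_cpow_ofReal_nonneg pi_pos.le hu.le] at h
  rw [Complex.cpow_neg, ← div_eq_mul_inv]
  convert h using 3 with x
  · rw [mul_comm]; push_cast; ring_nf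
  · push_cast; field_simp; ring

lemma integrableOn_cexp_neg_mul_add_one_div_mul_cpow {c : ℝ} (hc : 0 < c) {w : ℂ}
    (hw : 0 < w.re) :
    IntegrableOn (fun t : ℝ => Complex.exp (-(c * (t + 1 / t) : ℝ)) * (t : ℂ) ^ (w - 1))
      (Ioi 0) := by
  have hGamma : IntegrableOn (fun t : ℝ => t ^ (w.re - 1) * Real.exp (-c * t ^ (1 : ℝ)))
      (Ioi 0) :=
    integrableOn_rpow_mul_exp_neg_mul_rpow (by linarith) one_pos hc
  refine hGamma.mono' (by fun_prop) ?_
  filter_upwards [ae_restrict_mem measurableSet_Ioi] with t (ht : 0 < t)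
  rw [norm_mul, ← Complex.ofReal_neg, Complex.norm_exp_ofReal,
    Complex.norm_cpow_eq_rpow_re_of_pos ht, Complex.sub_re, Complex.one_re, Real.rpow_one,
    mul_comm]
  gcongr
  nlinarith [one_div_pos.mpr ht]

lemma integral_cpow_mul_cexp_neg_add_sq_div_Ioi {c : ℝ} (hc : 0 < c) (w : ℂ) :
    ∫ u in Ioi (0 : ℝ), (u : ℂ) ^ (w - 1) * Complex.exp (-(u + c ^ 2 / u : ℝ)) =
      (c : ℂ) ^ w *
        ∫ t in Ioi (0 : ℝ), Complex.exp (-(c * (t + 1 / t) : ℝ)) * (t : ℂ) ^ (w - 1) := by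
  have hc' : (c : ℂ) ≠ 0 := Complex.ofReal_ne_zero.mpr hc.ne'
  have hsubst := integral_comp_mul_left_Ioi'
    (fun u : ℝ => (u : ℂ) ^ (w - 1) * Complex.exp (-(u + c ^ 2 / u : ℝ))) 0 hc
  rw [mul_zero] at hsubst
  rw [← hsubst, Complex.real_smul, ← integral_const_mul, ← integral_const_mul]
  refine setIntegral_congr_fun measurableSet_Ioi fun t (ht : 0 < t) => ?_
  have hexp : c * t + c ^ 2 / (c * t) = c * (t + 1 / t) := by field_simp
  rw [hexp, Complex.ofReal_mul, Complex.mul_cpow_ofReal_nonneg hc.le ht.le,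
    Complex.cpow_sub _ _ hc', Complex.cpow_one]
  field_simp

noncomputable def gammaGaussKernel (a : ℝ) (s : ℂ) (u x : ℝ) : ℂ :=
  (u : ℂ) ^ (s - 1) * Complex.exp (-((1 + x ^ 2 : ℝ) * u)) *
    Complex.exp (-(2 * π * a * x : ℝ) * Complex.I)

lemma norm_gammaGaussKernel {u : ℝ} (hu : 0 < u) (a : ℝ) (s : ℂ) (x : ℝ) :
    ‖gammaGaussKernel a s u x‖ = u ^ (s.re - 1) * Real.exp (-u) * Real.exp (-u * x ^ 2) := by
  rw [gammaGaussKernel, norm_mul, norm_mul, ← Complex.ofReal_mul, ← Complex.ofReal_neg,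
    Complex.norm_exp_ofReal, ← Complex.ofReal_neg, Complex.norm_exp_ofReal_mul_I,
    Complex.norm_cpow_eq_rpow_re_of_pos hu, mul_one, mul_assoc, ← Real.exp_add]
  congr 3; ring

lemma integral_Ioi_gammaGaussKernel {s : ℂ} (hs : 0 < s.re) (a x : ℝ) :
    ∫ u in Ioi (0 : ℝ), gammaGaussKernel a s u x =
      Complex.Gamma s * (((1 + x ^ 2 : ℝ) : ℂ) ^ (-s) *
        Complex.exp (-(2 * π * a * x : ℝ) * Complex.I)) := by
  have hx : 0 < 1 + x ^ 2 := by positivity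
  simp only [gammaGaussKernel]
  rw [integral_mul_const, Complex.integral_cpow_mul_exp_neg_mul_Ioi hs hx, one_div,
    Complex.inv_cpow_ofReal_nonneg hx.le, ← Complex.cpow_neg]
  ring

lemma integral_gammaGaussKernel {u : ℝ} (hu : 0 < u) (a : ℝ) (s : ℂ) :
    ∫ x, gammaGaussKernel a s u x =
      (π : ℂ) ^ (1 / 2 : ℂ) *
        ((u : ℂ) ^ (s - 1 / 2 - 1) * Complex.exp (-(u + (π * |a|) ^ 2 / u : ℝ))) := by
  have hu' : (u : ℂ) ≠ 0 := Complex.ofReal_ne_zero.mpr hu.ne'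
  have hsplit (x : ℝ) : gammaGaussKernel a s u x = (u : ℂ) ^ (s - 1) * Complex.exp (-u) *
      (Complex.exp (-(u * x ^ 2 : ℝ)) * Complex.exp (-(2 * π * a * x : ℝ) * Complex.I)) := by
    rw [gammaGaussKernel,
      show (-((1 + x ^ 2 : ℝ) * u) : ℂ) = -u + -(u * x ^ 2 : ℝ) by push_cast; ring,
      Complex.exp_add]
    ring
  simp_rw [hsplit]
  rw [integral_const_mul, integral_gaussian_mul_cexp_neg_two_pi_mul_I hu,
    show s - 1 / 2 - 1 = s - 1 + -(1 / 2) by ring, Complex.cpow_add _ _ hu',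
    mul_pow, sq_abs, Complex.ofReal_add, neg_add, Complex.exp_add]
  ring

lemma integrable_gammaGaussKernel (a : ℝ) {s : ℂ} (hs : 1 / 2 < s.re) :
    Integrable (Function.uncurry (gammaGaussKernel a s))
      ((volume.restrict (Ioi 0)).prod volume) := by
  have hmeas : AEStronglyMeasurable (Function.uncurry (gammaGaussKernel a s))
      ((volume.restrict (Ioi 0)).prod volume) := by
    unfold gammaGaussKernel Function.uncurry
    fun_prop
  have hslice (u : ℝ) (hu : 0 < u) : Integrable fun x => gammaGaussKernel a s u x := by
    refine (integrable_norm_iff (by unfold gammaGaussKernel; fun_prop)).mp ?_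
    simp_rw [norm_gammaGaussKernel hu]
    exact (integrable_exp_neg_mul_sq hu).const_mul _
  have hnorm : IntegrableOn (fun u => ∫ x, ‖gammaGaussKernel a s u x‖) (Ioi 0) := by
    have hGamma : IntegrableOn (fun u : ℝ => u ^ (s.re - 3 / 2) * Real.exp (-1 * u ^ (1 : ℝ)))
        (Ioi 0) := integrableOn_rpow_mul_exp_neg_mul_rpow (by linarith) one_pos one_pos
    refine IntegrableOn.congr_fun (hGamma.const_mul √π) (fun u (hu : 0 < u) => ?_)
      measurableSet_Ioi
    simp_rw [norm_gammaGaussKernel hu, integral_const_mul, integral_gaussian,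
      Real.sqrt_div' _ hu.le, Real.sqrt_eq_rpow u, Real.rpow_one]
    rw [show s.re - 3 / 2 = s.re - 1 - 1 / 2 by ring, Real.rpow_sub hu, neg_one_mul]
    ring
  rw [integrable_prod_iff hmeas]
  exact ⟨(ae_restrict_mem measurableSet_Ioi).mono hslice, hnorm⟩

lemma integrable_one_add_sq_cpow_neg_mul_cexp (a : ℝ) {s : ℂ} (hs : 1 / 2 < s.re) :
    Integrable (fun x : ℝ => ((1 + x ^ 2 : ℝ) : ℂ) ^ (-s) *
      Complex.exp (-(2 * π * a * x : ℝ) * Complex.I)) := by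
  have hΓ : Complex.Gamma s ≠ 0 := Complex.Gamma_ne_zero_of_re_pos (by linarith)
  simpa only [Function.uncurry_apply_pair, integral_Ioi_gammaGaussKernel (by linarith : 0 < s.re),
    ← mul_assoc, inv_mul_cancel₀ hΓ, one_mul]
    using (integrable_gammaGaussKernel a hs).integral_prod_right.const_mul (Complex.Gamma s)⁻¹

lemma Gamma_mul_integral_one_add_sq_cpow_neg_mul_cexp (a : ℝ) {s : ℂ} (hs : 1 / 2 < s.re) :
    Complex.Gamma s * ∫ x : ℝ, ((1 + x ^ 2 : ℝ) : ℂ) ^ (-s) *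
        Complex.exp (-(2 * π * a * x : ℝ) * Complex.I) =
      (π : ℂ) ^ (1 / 2 : ℂ) * ∫ u in Ioi (0 : ℝ),
        (u : ℂ) ^ (s - 1 / 2 - 1) * Complex.exp (-(u + (π * |a|) ^ 2 / u : ℝ)) := by
  calc _ = ∫ x, ∫ u in Ioi (0 : ℝ), gammaGaussKernel a s u x := by
          simp_rw [integral_Ioi_gammaGaussKernel (by linarith : 0 < s.re), integral_const_mul]
    _ = ∫ u in Ioi (0 : ℝ), ∫ x, gammaGaussKernel a s u x :=
          (integral_integral_swap (integrable_gammaGaussKernel a hs)).symm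
    _ = _ := by
          rw [← integral_const_mul]
          exact setIntegral_congr_fun measurableSet_Ioi fun u hu => integral_gammaGaussKernel hu a s

/-- For real `a ≠ 0` and complex `s` with `Re(s) > 1/2`, the integrals
`∫_ℝ (1+x²)^{-s} e^{-2πiax} dx` and `∫_0^∞ e^{-π(t+1/t)|a|} t^{s-1/2} dt/t` both converge
absolutely, and
`∫_ℝ (1+x²)^{-s} e^{-2πiax} dx = (π^s·|a|^{s-1/2}/Γ(s)) · ∫_0^∞ e^{-π(t+1/t)|a|} t^{s-1/2} dt/t`. -/
theorem stmt9 (a : ℝ) (ha : a ≠ 0) (s : ℂ) (hs : 1 / 2 < s.re) :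
    Integrable (fun x : ℝ => ((1 + x ^ 2 : ℝ) : ℂ) ^ (-s) *
        Complex.exp (-(2 * π * a * x : ℝ) * Complex.I)) ∧
    IntegrableOn (fun t : ℝ =>
        Complex.exp (-(π * (t + 1 / t) * |a| : ℝ)) * (t : ℂ) ^ (s - 1 / 2) / (t : ℂ))
      (Set.Ioi 0) ∧
    ∫ x : ℝ, ((1 + x ^ 2 : ℝ) : ℂ) ^ (-s) * Complex.exp (-(2 * π * a * x : ℝ) * Complex.I)
      = ((π : ℂ) ^ s * ((|a| : ℝ) : ℂ) ^ (s - 1 / 2) / Complex.Gamma s) *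
        ∫ t in Set.Ioi (0 : ℝ),
          Complex.exp (-(π * (t + 1 / t) * |a| : ℝ)) * (t : ℂ) ^ (s - 1 / 2) / (t : ℂ) := by
  have hΓ : Complex.Gamma s ≠ 0 := Complex.Gamma_ne_zero_of_re_pos (by linarith)
  have hc : 0 < π * |a| := by positivity
  have hintegrand : ∀ t ∈ Ioi (0 : ℝ),
      Complex.exp (-(π * (t + 1 / t) * |a| : ℝ)) * (t : ℂ) ^ (s - 1 / 2) / (t : ℂ) =
        Complex.exp (-(π * |a| * (t + 1 / t) : ℝ)) * (t : ℂ) ^ (s - 1 / 2 - 1) := by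
    intro t (ht : 0 < t)
    rw [Complex.cpow_sub _ 1 (Complex.ofReal_ne_zero.mpr ht.ne'), Complex.cpow_one,
      mul_right_comm π]
    ring
  refine ⟨integrable_one_add_sq_cpow_neg_mul_cexp a hs,
    IntegrableOn.congr_fun (integrableOn_cexp_neg_mul_add_one_div_mul_cpow hc (by simpa using hs))
      (fun t ht => (hintegrand t ht).symm) measurableSet_Ioi, ?_⟩
  rw [setIntegral_congr_fun measurableSet_Ioi hintegrand, div_mul_eq_mul_div, eq_div_iff hΓ,
    mul_comm, Gamma_mul_integral_one_add_sq_cpow_neg_mul_cexp a hs,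
    integral_cpow_mul_cexp_neg_add_sq_div_Ioi hc, ← mul_assoc, Complex.ofReal_mul π |a|,
    Complex.mul_cpow_ofReal_nonneg pi_pos.le (abs_nonneg a), ← mul_assoc,
    ← Complex.cpow_add _ _ (Complex.ofReal_ne_zero.mpr pi_ne_zero), add_sub_cancel]
end

section
/- For every complex a ≠ 0 and every complex s with Re(s) > 1/2, the integral ∫_ℂ (1+|x|²)^{-2s} e^{-4πi·Re(ax)} dA(x), where dA is Lebesgue measure on ℂ ≅ ℝ², and the integral ∫_0^∞ e^{-2π(t+1/t)|a|} t^{2s-1} dt/t both converge absolutely, and ∫_ℂ (1+|x|²)^{-2s} e^{-4πi·Re(ax)} dA(x) = ((2π)^{2s} · |a|^{2s-1} / (2·Γ(2s))) · ∫_0^∞ e^{-2π(t+1/t)|a|} t^{2s-1} dt/t. -/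
/-!
Gamma-function subordination: for `Re z > 0`,
`Γ(z) (1 + |x|²)^{-z} = ∫₀^∞ u^{z-1} e^{-u(1+|x|²)} du`, which writes the integrand as a
superposition of Gaussians. For `Re z > 1` the double integral over `(0,∞) × ℂ` converges
absolutely, so by Fubini and the Fourier transform of the Gaussian
`Γ(z) ∫_ℂ (1+|x|²)^{-z} e^{-4πi Re(ax)} dA(x)
  = π ∫₀^∞ u^{z-1} e^{-u - (2π|a|)²/u} du/u`,
and the substitution `u = 2π|a| t` gives the stated formula with `z = 2s`.
-/

open Real MeasureTheory Set
open scoped RealInnerProductSpace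

lemma integral_cpow_mul_cexp_neg_mul_Ioi_eq {z : ℂ} (hz : 0 < z.re) {r : ℝ} (hr : 0 < r) :
    ∫ u in Ioi (0 : ℝ), (u : ℂ) ^ (z - 1) * Complex.exp (-(u * r : ℝ)) =
      Complex.Gamma z * (r : ℂ) ^ (-z) := by
  have harg : (r : ℂ).arg ≠ π := by
    rw [Complex.arg_ofReal_of_nonneg hr.le]; exact Real.pi_ne_zero.symm
  simp_rw [Complex.ofReal_mul, mul_comm (_ : ℂ) (r : ℂ)]
  rw [Complex.integral_cpow_mul_exp_neg_mul_Ioi hz hr, one_div, Complex.inv_cpow _ _ harg,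
    ← Complex.cpow_neg, mul_comm]

lemma cexp_neg_mul_sq_norm_mul_cexp_re_mul_I (u c : ℝ) (a x : ℂ) :
    Complex.exp (-(u * ‖x‖ ^ 2 : ℝ)) * Complex.exp (-(c * (a * x).re : ℝ) * Complex.I) =
      Complex.exp
        (-(u : ℂ) * ‖x‖ ^ 2 + -(c * Complex.I) * ((⟪(starRingEnd ℂ) a, x⟫ : ℝ) : ℂ)) := by
  have hinner : ⟪(starRingEnd ℂ) a, x⟫ = (a * x).re := by
    rw [Complex.inner, Complex.conj_conj, mul_comm]
  rw [← Complex.exp_add, hinner]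
  push_cast
  ring_nf

lemma integrable_cexp_neg_mul_sq_norm_mul_cexp_re_mul_I {u : ℝ} (hu : 0 < u) (c : ℝ) (a : ℂ) :
    Integrable fun x : ℂ =>
      Complex.exp (-(u * ‖x‖ ^ 2 : ℝ)) *
        Complex.exp (-(c * (a * x).re : ℝ) * Complex.I) := by
  simp_rw [cexp_neg_mul_sq_norm_mul_cexp_re_mul_I]
  exact GaussianFourier.integrable_cexp_neg_mul_sq_norm_add (by simpa using hu) _ _

lemma integral_cexp_neg_mul_sq_norm_mul_cexp_re_mul_I {u : ℝ} (hu : 0 < u) (c : ℝ) (a : ℂ) :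
    ∫ x : ℂ, Complex.exp (-(u * ‖x‖ ^ 2 : ℝ)) *
        Complex.exp (-(c * (a * x).re : ℝ) * Complex.I) =
      π / u * Complex.exp (-(c ^ 2 * ‖a‖ ^ 2 / (4 * u) : ℝ)) := by
  simp_rw [cexp_neg_mul_sq_norm_mul_cexp_re_mul_I]
  rw [GaussianFourier.integral_cexp_neg_mul_sq_norm_add (by simpa using hu),
    Complex.finrank_real_complex, Complex.norm_conj, show ((2 : ℕ) : ℂ) / 2 = 1 by norm_num,
    Complex.cpow_one]
  push_cast
  rw [neg_sq, mul_pow, Complex.I_sq]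
  ring_nf

noncomputable def subordinationKernel (z : ℂ) (c : ℝ) (a : ℂ) (u : ℝ) (x : ℂ) : ℂ :=
  (u : ℂ) ^ (z - 1) * Complex.exp (-(u * (1 + ‖x‖ ^ 2) : ℝ)) *
    Complex.exp (-(c * (a * x).re : ℝ) * Complex.I)

namespace subordinationKernel

variable {z : ℂ} {c : ℝ} {a : ℂ}

lemma eq_mul_gaussian (u : ℝ) (x : ℂ) :
    subordinationKernel z c a u x = (u : ℂ) ^ (z - 1) * Complex.exp (-u) *
      (Complex.exp (-(u * ‖x‖ ^ 2 : ℝ)) *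
        Complex.exp (-(c * (a * x).re : ℝ) * Complex.I)) := by
  simp only [subordinationKernel, mul_add, mul_one, Complex.ofReal_add, neg_add, Complex.exp_add]
  ring

lemma norm_eq {u : ℝ} (hu : 0 < u) (x : ℂ) :
    ‖subordinationKernel z c a u x‖ = u ^ (z.re - 1) * rexp (-u) * rexp (-u * ‖x‖ ^ 2) := by
  rw [eq_mul_gaussian, norm_mul, norm_mul, norm_mul, Complex.norm_cpow_eq_rpow_re_of_pos hu,
    ← Complex.ofReal_neg, ← Complex.ofReal_neg, ← Complex.ofReal_neg, Complex.norm_exp_ofReal,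
    Complex.norm_exp_ofReal, Complex.norm_exp_ofReal_mul_I, mul_one, Complex.sub_re,
    Complex.one_re, neg_mul]

lemma integral_Ioi (hz : 0 < z.re) (x : ℂ) :
    ∫ u in Ioi (0 : ℝ), subordinationKernel z c a u x =
      Complex.Gamma z * (((1 + ‖x‖ ^ 2 : ℝ) : ℂ) ^ (-z) *
        Complex.exp (-(c * (a * x).re : ℝ) * Complex.I)) := by
  simp only [subordinationKernel]
  rw [integral_mul_const, integral_cpow_mul_cexp_neg_mul_Ioi_eq hz (by positivity), mul_assoc]

lemma integral_complex {u : ℝ} (hu : 0 < u) :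
    ∫ x : ℂ, subordinationKernel z c a u x =
      π * ((u : ℂ) ^ (z - 1) / u * Complex.exp (-(u + (c * ‖a‖ / 2) ^ 2 / u : ℝ))) := by
  simp_rw [eq_mul_gaussian]
  rw [integral_const_mul, integral_cexp_neg_mul_sq_norm_mul_cexp_re_mul_I hu,
    show c ^ 2 * ‖a‖ ^ 2 / (4 * u) = (c * ‖a‖ / 2) ^ 2 / u by ring]
  push_cast
  rw [neg_add, Complex.exp_add]
  ring

lemma integrable (hz : 1 < z.re) :
    Integrable (Function.uncurry (subordinationKernel z c a))
      ((volume.restrict (Ioi 0)).prod volume) := by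
  have hmeas : AEStronglyMeasurable (Function.uncurry (subordinationKernel z c a))
      ((volume.restrict (Ioi 0)).prod volume) := by
    unfold subordinationKernel Function.uncurry
    fun_prop
  refine (integrable_prod_iff hmeas).2 ⟨?_, ?_⟩
  · filter_upwards [ae_restrict_mem measurableSet_Ioi] with u hu
    simp only [Function.uncurry_apply_pair, eq_mul_gaussian]
    exact (integrable_cexp_neg_mul_sq_norm_mul_cexp_re_mul_I hu c a).const_mul _
  · refine IntegrableOn.congr_fun
      ((Real.GammaIntegral_convergent (s := z.re - 1) (by linarith)).const_mul π)
      (fun u (hu : 0 < u) => ?_) measurableSet_Ioi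
    simp only [Function.uncurry_apply_pair, norm_eq hu, integral_const_mul]
    rw [GaussianFourier.integral_rexp_neg_mul_sq_norm hu, Complex.finrank_real_complex,
      Nat.cast_ofNat, div_self two_ne_zero, Real.rpow_one, Real.rpow_sub_one hu.ne']
    field_simp

end subordinationKernel

theorem integral_one_add_sq_norm_cpow_neg_mul_cexp {z : ℂ} (hz : 1 < z.re) (c : ℝ) (a : ℂ) :
    Integrable (fun x : ℂ => ((1 + ‖x‖ ^ 2 : ℝ) : ℂ) ^ (-z) *
        Complex.exp (-(c * (a * x).re : ℝ) * Complex.I)) ∧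
    IntegrableOn (fun u : ℝ => (u : ℂ) ^ (z - 1) / u *
        Complex.exp (-(u + (c * ‖a‖ / 2) ^ 2 / u : ℝ))) (Ioi 0) ∧
    Complex.Gamma z * ∫ x : ℂ, ((1 + ‖x‖ ^ 2 : ℝ) : ℂ) ^ (-z) *
        Complex.exp (-(c * (a * x).re : ℝ) * Complex.I) =
      π * ∫ u in Ioi (0 : ℝ), (u : ℂ) ^ (z - 1) / u *
        Complex.exp (-(u + (c * ‖a‖ / 2) ^ 2 / u : ℝ)) := by
  have hz₀ : 0 < z.re := by linarith
  have hK := subordinationKernel.integrable (c := c) (a := a) hz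
  have hΓ : Complex.Gamma z ≠ 0 := Complex.Gamma_ne_zero_of_re_pos hz₀
  have hπ : (π : ℂ) ≠ 0 := by exact_mod_cast Real.pi_ne_zero
  refine ⟨?_, ?_, ?_⟩
  · refine (hK.integral_prod_right.const_mul (Complex.Gamma z)⁻¹).congr
      (.of_forall fun x => ?_)
    simp only [Function.uncurry_apply_pair]
    rw [subordinationKernel.integral_Ioi hz₀, inv_mul_cancel_left₀ hΓ]
  · refine IntegrableOn.congr_fun (hK.integral_prod_left.const_mul (π : ℂ)⁻¹)
      (fun u (hu : 0 < u) => ?_) measurableSet_Ioi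
    simp only [Function.uncurry_apply_pair]
    rw [subordinationKernel.integral_complex hu, inv_mul_cancel_left₀ hπ]
  · calc Complex.Gamma z * ∫ x : ℂ, ((1 + ‖x‖ ^ 2 : ℝ) : ℂ) ^ (-z) *
            Complex.exp (-(c * (a * x).re : ℝ) * Complex.I)
        = ∫ x : ℂ, ∫ u in Ioi (0 : ℝ), subordinationKernel z c a u x := by
          rw [← integral_const_mul]
          simp only [subordinationKernel.integral_Ioi hz₀]
      _ = ∫ u in Ioi (0 : ℝ), ∫ x : ℂ, subordinationKernel z c a u x :=
          (integral_integral_swap hK).symm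
      _ = _ := by
          rw [← integral_const_mul]
          exact setIntegral_congr_fun measurableSet_Ioi fun u hu =>
            subordinationKernel.integral_complex hu

lemma cpow_div_mul_cexp_neg_add_sq_div_comp_mul {b t : ℝ} (hb : 0 < b) (ht : 0 < t) (z : ℂ) :
    ((b * t : ℝ) : ℂ) ^ (z - 1) / (b * t : ℝ) *
        Complex.exp (-(b * t + b ^ 2 / (b * t) : ℝ)) =
      (b : ℂ) ^ (z - 1) / b *
        (Complex.exp (-(b * (t + 1 / t) : ℝ)) * (t : ℂ) ^ (z - 1) / t) := by
  have hb' : (b : ℂ) ≠ 0 := by exact_mod_cast hb.ne'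
  have hexp : b * t + b ^ 2 / (b * t) = b * (t + 1 / t) := by field_simp
  rw [hexp, Complex.ofReal_mul, Complex.mul_cpow_ofReal_nonneg hb.le ht.le]
  field_simp

lemma integrableOn_cpow_div_mul_cexp_neg_add_sq_div_iff {b : ℝ} (hb : 0 < b) (z : ℂ) :
    IntegrableOn (fun u : ℝ => (u : ℂ) ^ (z - 1) / u * Complex.exp (-(u + b ^ 2 / u : ℝ)))
        (Ioi 0) ↔
      IntegrableOn (fun t : ℝ => Complex.exp (-(b * (t + 1 / t) : ℝ)) * (t : ℂ) ^ (z - 1) / t)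
        (Ioi 0) := by
  have hc : (b : ℂ) ^ (z - 1) / b ≠ 0 := by
    have hb' : (b : ℂ) ≠ 0 := by exact_mod_cast hb.ne'
    exact div_ne_zero (by simp [Complex.cpow_eq_zero_iff, hb']) hb'
  have hscale := integrableOn_Ioi_comp_mul_left_iff
    (fun u : ℝ => (u : ℂ) ^ (z - 1) / u * Complex.exp (-(u + b ^ 2 / u : ℝ))) 0 hb
  rw [mul_zero, integrableOn_congr_fun (fun t (ht : t ∈ Ioi 0) =>
    cpow_div_mul_cexp_neg_add_sq_div_comp_mul hb ht z) measurableSet_Ioi] at hscale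
  rw [← hscale]
  exact integrable_const_mul_iff (isUnit_iff_ne_zero.2 hc) _

lemma integral_cpow_div_mul_cexp_neg_add_sq_div {b : ℝ} (hb : 0 < b) (z : ℂ) :
    ∫ u in Ioi (0 : ℝ), (u : ℂ) ^ (z - 1) / u * Complex.exp (-(u + b ^ 2 / u : ℝ)) =
      (b : ℂ) ^ (z - 1) *
        ∫ t in Ioi (0 : ℝ),
          Complex.exp (-(b * (t + 1 / t) : ℝ)) * (t : ℂ) ^ (z - 1) / t := by
  have hb' : (b : ℂ) ≠ 0 := by exact_mod_cast hb.ne'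
  have h := integral_comp_mul_left_Ioi
    (fun u : ℝ => (u : ℂ) ^ (z - 1) / u * Complex.exp (-(u + b ^ 2 / u : ℝ))) 0 hb
  rw [mul_zero, setIntegral_congr_fun measurableSet_Ioi fun t (ht : 0 < t) =>
    cpow_div_mul_cexp_neg_add_sq_div_comp_mul hb ht z, integral_const_mul, Complex.real_smul,
    Complex.ofReal_inv] at h
  rw [(inv_mul_eq_iff_eq_mul₀ hb').1 h.symm]
  field_simp

lemma pi_mul_two_pi_mul_cpow {r : ℝ} (hr : 0 ≤ r) (z : ℂ) :
    π * ((2 * π * r : ℝ) : ℂ) ^ (z - 1) =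
      ((2 * π : ℝ) : ℂ) ^ z * (r : ℂ) ^ (z - 1) / 2 := by
  have h2π : ((2 * π : ℝ) : ℂ) ≠ 0 := by exact_mod_cast Real.two_pi_pos.ne'
  rw [Complex.ofReal_mul, Complex.mul_cpow_ofReal_nonneg Real.two_pi_pos.le hr,
    Complex.cpow_sub _ _ h2π, Complex.cpow_one]
  field_simp
  push_cast
  ring

/-- For complex `a ≠ 0` and complex `s` with `Re(s) > 1/2`, the integrals
`∫_ℂ (1+|x|²)^{-2s} e^{-4πi·Re(ax)} dA(x)` and `∫_0^∞ e^{-2π(t+1/t)|a|} t^{2s-1} dt/t` both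
converge absolutely, and
`∫_ℂ (1+|x|²)^{-2s} e^{-4πi·Re(ax)} dA(x)
  = ((2π)^{2s}·|a|^{2s-1}/(2·Γ(2s))) · ∫_0^∞ e^{-2π(t+1/t)|a|} t^{2s-1} dt/t`. -/
theorem stmt10 (a : ℂ) (ha : a ≠ 0) (s : ℂ) (hs : 1 / 2 < s.re) :
    Integrable (fun x : ℂ => ((1 + ‖x‖ ^ 2 : ℝ) : ℂ) ^ (-(2 * s)) *
        Complex.exp (-(4 * π * (a * x).re : ℝ) * Complex.I)) ∧
    IntegrableOn (fun t : ℝ =>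
        Complex.exp (-(2 * π * (t + 1 / t) * ‖a‖ : ℝ)) * (t : ℂ) ^ (2 * s - 1) /
          (t : ℂ)) (Set.Ioi 0) ∧
    ∫ x : ℂ, ((1 + ‖x‖ ^ 2 : ℝ) : ℂ) ^ (-(2 * s)) *
        Complex.exp (-(4 * π * (a * x).re : ℝ) * Complex.I)
      = (((2 * π : ℝ) : ℂ) ^ (2 * s) * ((‖a‖ : ℝ) : ℂ) ^ (2 * s - 1) /
          (2 * Complex.Gamma (2 * s))) *
        ∫ t in Set.Ioi (0 : ℝ),
          Complex.exp (-(2 * π * (t + 1 / t) * ‖a‖ : ℝ)) * (t : ℂ) ^ (2 * s - 1) /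
            (t : ℂ) := by
  have hz : 1 < (2 * s).re := by
    simp only [Complex.mul_re, Complex.re_ofNat, Complex.im_ofNat]; linarith
  have hb : 0 < 2 * π * ‖a‖ := by have := norm_pos_iff.2 ha; positivity
  have hΓ : Complex.Gamma (2 * s) ≠ 0 := Complex.Gamma_ne_zero_of_re_pos (by linarith)
  obtain ⟨hf, hg, hfg⟩ := integral_one_add_sq_norm_cpow_neg_mul_cexp hz (4 * π) a
  have hhalf : 4 * π * ‖a‖ / 2 = 2 * π * ‖a‖ := by ring
  have hrearrange : ∀ t : ℝ, 2 * π * (t + 1 / t) * ‖a‖ = 2 * π * ‖a‖ * (t + 1 / t) :=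
    fun t => by ring
  simp_rw [hhalf] at hg hfg
  simp_rw [hrearrange]
  rw [integrableOn_cpow_div_mul_cexp_neg_add_sq_div_iff hb] at hg
  rw [integral_cpow_div_mul_cexp_neg_add_sq_div hb, ← mul_assoc,
    pi_mul_two_pi_mul_cpow (norm_nonneg a)] at hfg
  refine ⟨hf, hg, mul_left_cancel₀ hΓ ?_⟩
  rw [hfg]
  field_simp
end

section
/- Let μ be the Haar measure on the quotient group G = GL₂(ℚ_p)/Z, normalized so that the compact open image of GL₂(ℤ_p) in G has measure 1. Then for every real σ > 1, ∫_G N(g)^{-σ} dμ(g) ≤ (1 + p^{2-σ})/(1 - p^{1-σ}). -/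
open MeasureTheory
open scoped Matrix

attribute [local instance] Matrix.normedAddCommGroup Matrix.normedSpace

/-- The map `Ad(g) : x ↦ g·x·g⁻¹` on 2×2 matrices over `ℚ_p`, as a continuous linear
operator, where 2×2 matrices carry the supremum norm of the entries. -/
noncomputable def adPadic (p : ℕ) [Fact p.Prime] (g : GL (Fin 2) ℚ_[p]) :
    Matrix (Fin 2) (Fin 2) ℚ_[p] →L[ℚ_[p]] Matrix (Fin 2) (Fin 2) ℚ_[p] :=
  LinearMap.toContinuousLinearMap
    ((LinearMap.mulRight ℚ_[p] (↑(g⁻¹) : Matrix (Fin 2) (Fin 2) ℚ_[p])).comp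
      (LinearMap.mulLeft ℚ_[p] (↑g : Matrix (Fin 2) (Fin 2) ℚ_[p])))

/-!
Multiplying `g` by a scalar makes it a primitive integral matrix `h`; let
`‖det h‖ = p ^ (-n)`. Testing `Ad h` on an elementary matrix gives `N g ≥ ‖Ad h‖ ≥ p ^ n`, and
column operations over `ℤ_p` (Hermite normal form) put `h` in a coset
`!![p ^ a, 0; j, p ^ (n - a)] * GL₂(ℤ_p)` with `a ≤ n` and `j < p ^ (n - a)`. Hence every point
of `G` lies in some `C n`, a union of fewer than `2 p ^ n` translates of the image of `GL₂(ℤ_p)`,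
at which `N ≥ p ^ n`. So the integral is at most
`∑ p ^ (-n σ) μ (C n) ≤ 1 + ∑_{n ≥ 1} 2 p ^ (n (1 - σ)) = (1 + p ^ (1 - σ)) / (1 - p ^ (1 - σ))`.
-/

open scoped ENNReal Pointwise

theorem Matrix.mul_single_mul_apply {l m n o α : Type*} [Fintype m] [Fintype n] [DecidableEq m]
    [DecidableEq n] [NonUnitalNonAssocSemiring α] (M : Matrix l m α) (N : Matrix n o α)
    (a : m) (b : n) (c : α) (i : l) (j : o) :
    (M * Matrix.single a b c * N) i j = M i a * c * N b j := by
  simp [Matrix.mul_apply, Matrix.single, ite_and]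

theorem Matrix.norm_inv_apply_rev_fin_two {K : Type*} [NormedField K]
    (A : Matrix (Fin 2) (Fin 2) K) (i j : Fin 2) :
    ‖A⁻¹ j.rev i.rev‖ = ‖A i j‖ / ‖A.det‖ := by
  rw [Matrix.inv_def, Ring.inverse_eq_inv', Matrix.smul_apply, smul_eq_mul, norm_mul, norm_inv,
    Matrix.adjugate_fin_two, div_eq_inv_mul]
  fin_cases i <;> fin_cases j <;> simp

theorem Nat.sum_range_succ_pow_sub_lt {q : ℕ} (hq : 2 ≤ q) (n : ℕ) :
    ∑ a ∈ Finset.range (n + 1), q ^ (n - a) < 2 * q ^ n := by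
  have hreflect := Finset.sum_range_reflect (q ^ ·) (n + 1)
  rw [add_tsub_cancel_right] at hreflect
  rw [hreflect, Finset.sum_range_succ, two_mul, add_comm]
  exact Nat.add_lt_add_left (Nat.geomSum_lt hq fun k hk => Finset.mem_range.mp hk) _

theorem MeasureTheory.lintegral_le_tsum_mul_measure {α ι : Type*} [MeasurableSpace α] [Countable ι]
    (μ : Measure α) {f : α → ℝ≥0∞} {s : ι → Set α} {c : ι → ℝ≥0∞}
    (h : ∀ x, ∃ i, x ∈ s i ∧ f x ≤ c i) : ∫⁻ x, f x ∂μ ≤ ∑' i, c i * μ (s i) :=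
  calc ∫⁻ x, f x ∂μ ≤ ∫⁻ x, ∑' i, (toMeasurable μ (s i)).indicator (fun _ => c i) x ∂μ :=
        lintegral_mono fun x => by
          obtain ⟨i, hi, hfi⟩ := h x
          rw [← Set.indicator_of_mem (subset_toMeasurable μ _ hi) fun _ => c i] at hfi
          exact hfi.trans (ENNReal.le_tsum i)
    _ = ∑' i, c i * μ (s i) := by
        rw [lintegral_tsum fun i =>
          (measurable_const.indicator (measurableSet_toMeasurable μ _)).aemeasurable]
        simp_rw [lintegral_indicator_const (measurableSet_toMeasurable μ _), measure_toMeasurable]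

theorem Real.pow_rpow_neg_mul_pow {x : ℝ} (hx : 0 < x) (m : ℕ) (σ : ℝ) :
    (x ^ m) ^ (-σ) * x ^ m = (x ^ (1 - σ)) ^ m := by
  rw [← Real.rpow_natCast_mul hx.le, ← Real.rpow_natCast x m, ← Real.rpow_add hx,
    ← Real.rpow_mul_natCast hx.le]
  ring_nf

theorem tsum_ofReal_rpow_neg_mul_le {q : ℕ} (hq : 1 < q) {σ : ℝ} (hσ : 1 < σ) {a : ℕ → ℝ≥0∞}
    (ha₀ : a 0 ≤ 1) (ha : ∀ n, a (n + 1) ≤ 2 * (q : ℝ≥0∞) ^ (n + 1)) :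
    ∑' n, ENNReal.ofReal (((q : ℝ) ^ n) ^ (-σ)) * a n ≤
      ENNReal.ofReal ((1 + (q : ℝ) ^ (2 - σ)) / (1 - (q : ℝ) ^ (1 - σ))) := by
  have hq₀ : (0 : ℝ) < q := by positivity
  set t := (q : ℝ) ^ (1 - σ) with ht
  have ht₀ : 0 ≤ t := by positivity
  have ht₁ : t < 1 := Real.rpow_lt_one_of_one_lt_of_neg (by exact_mod_cast hq) (by linarith)
  have ht₁' : 0 < 1 - t := by linarith
  have hterm (n : ℕ) : ENNReal.ofReal (((q : ℝ) ^ (n + 1)) ^ (-σ)) * a (n + 1) ≤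
      ENNReal.ofReal (2 * t ^ (n + 1)) := by
    calc _ ≤ ENNReal.ofReal (((q : ℝ) ^ (n + 1)) ^ (-σ)) *
          ENNReal.ofReal (2 * (q : ℝ) ^ (n + 1)) := by
          gcongr
          simpa [ENNReal.ofReal_mul, ENNReal.ofReal_pow] using ha n
      _ = ENNReal.ofReal (2 * t ^ (n + 1)) := by
          rw [← ENNReal.ofReal_mul (by positivity), mul_left_comm,
            Real.pow_rpow_neg_mul_pow hq₀]
  have hgeom : ∑' n : ℕ, 2 * t ^ (n + 1) = 2 * t / (1 - t) := by
    simp_rw [pow_succ', ← mul_assoc]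
    rw [tsum_mul_left, tsum_geometric_of_lt_one ht₀ ht₁, div_eq_mul_inv]
  calc ∑' n, ENNReal.ofReal (((q : ℝ) ^ n) ^ (-σ)) * a n
      = ENNReal.ofReal (((q : ℝ) ^ 0) ^ (-σ)) * a 0 +
          ∑' n, ENNReal.ofReal (((q : ℝ) ^ (n + 1)) ^ (-σ)) * a (n + 1) :=
        tsum_eq_zero_add' ENNReal.summable
    _ ≤ 1 + ∑' n : ℕ, ENNReal.ofReal (2 * t ^ (n + 1)) :=
        add_le_add (by simpa using ha₀) (ENNReal.tsum_le_tsum hterm)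
    _ = ENNReal.ofReal ((1 + t) / (1 - t)) := by
        rw [← ENNReal.ofReal_tsum_of_nonneg (fun n => by positivity)
          (((summable_geometric_of_lt_one ht₀ ht₁).mul_left (2 * t)).congr fun n => by ring),
          hgeom, ← ENNReal.ofReal_one, ← ENNReal.ofReal_add zero_le_one (by positivity)]
        congr 1
        field_simp
        ring
    _ ≤ ENNReal.ofReal ((1 + (q : ℝ) ^ (2 - σ)) / (1 - (q : ℝ) ^ (1 - σ))) := by
        refine ENNReal.ofReal_le_ofReal (div_le_div_of_nonneg_right ?_ ht₁'.le)
        rw [show (2 : ℝ) - σ = 1 + (1 - σ) by ring, Real.rpow_add hq₀, Real.rpow_one]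
        nlinarith [(Nat.one_lt_cast (α := ℝ)).mpr hq]

variable {p : ℕ} [Fact p.Prime]

def Matrix.IsPadicIntegral {m n : Type*} (A : Matrix m n ℚ_[p]) : Prop := ∀ i j, ‖A i j‖ ≤ 1

namespace Matrix.IsPadicIntegral

theorem mul {l m n : Type*} [Fintype m] {A : Matrix l m ℚ_[p]} {B : Matrix m n ℚ_[p]}
    (hA : A.IsPadicIntegral) (hB : B.IsPadicIntegral) : (A * B).IsPadicIntegral := fun i j =>
  IsUltrametricDist.norm_sum_le_of_forall_le_of_nonneg zero_le_one fun k _ => by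
    rw [norm_mul]; exact mul_le_one₀ (hA i k) (norm_nonneg _) (hB k j)

theorem norm_det_le_one {A : Matrix (Fin 2) (Fin 2) ℚ_[p]} (hA : A.IsPadicIntegral) :
    ‖A.det‖ ≤ 1 := by
  rw [det_fin_two, sub_eq_add_neg]
  refine (Padic.nonarchimedean _ _).trans (max_le ?_ ?_) <;>
  · simp only [norm_neg, norm_mul]; exact mul_le_one₀ (hA _ _) (norm_nonneg _) (hA _ _)

theorem inv {A : Matrix (Fin 2) (Fin 2) ℚ_[p]} (hA : A.IsPadicIntegral) (hdet : ‖A.det‖ = 1) :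
    A⁻¹.IsPadicIntegral := fun i j => by
  have h := A.norm_inv_apply_rev_fin_two j.rev i.rev
  rw [Fin.rev_rev, Fin.rev_rev, hdet, div_one] at h
  exact h ▸ hA j.rev i.rev

end Matrix.IsPadicIntegral

theorem Matrix.isPadicIntegral_fin_two_iff {a b c d : ℚ_[p]} :
    (!![a, b; c, d] : Matrix (Fin 2) (Fin 2) ℚ_[p]).IsPadicIntegral ↔
      ‖a‖ ≤ 1 ∧ ‖b‖ ≤ 1 ∧ ‖c‖ ≤ 1 ∧ ‖d‖ ≤ 1 := by
  simp [Matrix.IsPadicIntegral, Fin.forall_fin_two, and_assoc]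

theorem Padic.exists_norm_eq_zpow_neg_natCast {x : ℚ_[p]} (hx0 : x ≠ 0) (hx : ‖x‖ ≤ 1) :
    ∃ n : ℕ, ‖x‖ = (p : ℝ) ^ (-(n : ℤ)) :=
  ⟨x.valuation.toNat, by
    rw [Padic.norm_eq_zpow_neg_valuation hx0,
      Int.toNat_of_nonneg ((Padic.norm_le_one_iff_val_nonneg x).mp hx)]⟩

theorem Padic.norm_p_pow_div {x : ℚ_[p]} {n : ℕ} (hx : ‖x‖ = (p : ℝ) ^ (-(n : ℤ))) :
    ‖(p : ℚ_[p]) ^ n / x‖ = 1 := by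
  have hp : (p : ℝ) ≠ 0 := by exact_mod_cast (Fact.out : p.Prime).ne_zero
  rw [norm_div, Padic.norm_p_pow, hx, div_self (zpow_ne_zero _ hp)]

theorem Padic.exists_lt_pow_norm_natCast_sub_le {x : ℚ_[p]} (hx : ‖x‖ ≤ 1) (b : ℕ) :
    ∃ j < p ^ b, ‖(j : ℚ_[p]) - x‖ ≤ (p : ℝ) ^ (-(b : ℤ)) := by
  let y : ℤ_[p] := ⟨x, hx⟩
  refine ⟨y.appr b, y.appr_lt b, ?_⟩
  rw [norm_sub_rev]
  exact (PadicInt.norm_le_pow_iff_mem_span_pow _ b).mpr (y.appr_spec b)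

-- The carrier is written exactly as the set normalized to measure `1` in the main theorem.
def integralGL (p : ℕ) [Fact p.Prime] (n : Type*) [Fintype n] [DecidableEq n] :
    Subgroup (GL n ℚ_[p]) where
  carrier := {g | ∀ i j, ‖(↑g : Matrix n n ℚ_[p]) i j‖ ≤ 1 ∧ ‖(↑(g⁻¹) : Matrix n n ℚ_[p]) i j‖ ≤ 1}
  mul_mem' {g h} hg hh i j := by
    rw [mul_inv_rev]
    exact ⟨Matrix.IsPadicIntegral.mul (fun i j => (hg i j).1) (fun i j => (hh i j).1) i j,
      Matrix.IsPadicIntegral.mul (fun i j => (hh i j).2) (fun i j => (hg i j).2) i j⟩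
  one_mem' i j := by
    simp only [inv_one, Units.val_one, and_self]
    by_cases h : i = j <;> simp [Matrix.one_apply, h]
  inv_mem' {g} hg i j := by simpa [and_comm] using hg i j

namespace integralGL

variable {n : Type*} [Fintype n] [DecidableEq n]

theorem mem_iff {g : GL n ℚ_[p]} :
    g ∈ integralGL p n ↔
      (g : Matrix n n ℚ_[p]).IsPadicIntegral ∧ (↑g⁻¹ : Matrix n n ℚ_[p]).IsPadicIntegral :=
  show (∀ i j, _ ∧ _) ↔ (∀ i j, _) ∧ ∀ i j, _ by simp only [forall_and]

theorem norm_det_eq_one {k : GL (Fin 2) ℚ_[p]} (hk : k ∈ integralGL p (Fin 2)) :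
    ‖(k : Matrix (Fin 2) (Fin 2) ℚ_[p]).det‖ = 1 := by
  have hpos : 0 < ‖(k : Matrix (Fin 2) (Fin 2) ℚ_[p]).det‖ := norm_pos_iff.mpr k.det_ne_zero
  have hinv := (mem_iff.mp hk).2.norm_det_le_one
  rw [Matrix.coe_units_inv, Matrix.det_nonsing_inv, Ring.inverse_eq_inv', norm_inv,
    inv_le_one₀ hpos] at hinv
  exact le_antisymm (mem_iff.mp hk).1.norm_det_le_one hinv

theorem exists_coe_eq {κ : Matrix (Fin 2) (Fin 2) ℚ_[p]} (hκ : κ.IsPadicIntegral)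
    (hdet : ‖κ.det‖ = 1) : ∃ k ∈ integralGL p (Fin 2), (k : Matrix (Fin 2) (Fin 2) ℚ_[p]) = κ := by
  have hdet0 : κ.det ≠ 0 := by rintro h; simp [h] at hdet
  refine ⟨.mkOfDetNeZero κ hdet0, mem_iff.mpr ⟨hκ, ?_⟩, rfl⟩
  rw [Matrix.coe_units_inv]
  exact hκ.inv hdet

end integralGL

-- Instance search finds no norm on this space of operators (`‖adPadic p g‖` does not
-- elaborate), so the operator norm is supplied explicitly, as in the main theorem.
noncomputable def adPadicOpNorm (p : ℕ) [Fact p.Prime] (g : GL (Fin 2) ℚ_[p]) : ℝ :=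
  @Norm.norm _ ContinuousLinearMap.hasOpNorm (adPadic p g)

theorem norm_apply_mul_norm_inv_apply_le_adPadicOpNorm (g : GL (Fin 2) ℚ_[p]) (i a b j : Fin 2) :
    ‖(g : Matrix (Fin 2) (Fin 2) ℚ_[p]) i a‖ * ‖(↑g⁻¹ : Matrix (Fin 2) (Fin 2) ℚ_[p]) b j‖ ≤
      adPadicOpNorm p g := by
  have hx : ‖Matrix.single a b (1 : ℚ_[p])‖ ≤ 1 :=
    (Matrix.norm_le_iff zero_le_one).mpr fun i j => by
      by_cases h : a = i ∧ b = j <;> simp [Matrix.single, h]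
  calc ‖(g : Matrix (Fin 2) (Fin 2) ℚ_[p]) i a‖ * ‖(↑g⁻¹ : Matrix (Fin 2) (Fin 2) ℚ_[p]) b j‖
      = ‖adPadic p g (Matrix.single a b 1) i j‖ := by
        rw [show adPadic p g (Matrix.single a b 1) = _ * _ * _ from rfl,
          Matrix.mul_single_mul_apply, mul_one, norm_mul]
    _ ≤ ‖adPadic p g (Matrix.single a b 1)‖ := Matrix.norm_entry_le_entrywise_sup_norm _
    _ ≤ adPadicOpNorm p g * ‖Matrix.single a b (1 : ℚ_[p])‖ := (adPadic p g).le_opNorm _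
    _ ≤ adPadicOpNorm p g := mul_le_of_le_one_right (adPadic p g).opNorm_nonneg hx

theorem sq_norm_apply_div_norm_det_le_adPadicOpNorm (g : GL (Fin 2) ℚ_[p]) (i j : Fin 2) :
    ‖(g : Matrix (Fin 2) (Fin 2) ℚ_[p]) i j‖ ^ 2 / ‖(g : Matrix (Fin 2) (Fin 2) ℚ_[p]).det‖ ≤
      adPadicOpNorm p g := by
  have h := norm_apply_mul_norm_inv_apply_le_adPadicOpNorm g i j j.rev i.rev
  rwa [Matrix.coe_units_inv, Matrix.norm_inv_apply_rev_fin_two, mul_div_assoc', ← sq] at h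

theorem exists_scalar_mul_isPadicIntegral {n : Type*} [Fintype n] [DecidableEq n] [Nonempty n]
    (g : GL n ℚ_[p]) : ∃ u : ℚ_[p]ˣ, ∃ i j,
      (↑(Matrix.GeneralLinearGroup.scalar n u * g) : Matrix n n ℚ_[p]).IsPadicIntegral ∧
      ‖(↑(Matrix.GeneralLinearGroup.scalar n u * g) : Matrix n n ℚ_[p]) i j‖ = 1 := by
  obtain ⟨⟨i, j⟩, hmax⟩ := Finite.exists_max fun ij : n × n => ‖(g : Matrix n n ℚ_[p]) ij.1 ij.2‖
  have hne : (g : Matrix n n ℚ_[p]) i j ≠ 0 := by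
    intro h0
    have hg0 : (g : Matrix n n ℚ_[p]) = 0 := by
      ext k l
      simpa [h0] using hmax (k, l)
    simpa [hg0] using g.isUnit.ne_zero
  have hcoe (k l : n) : (↑(Matrix.GeneralLinearGroup.scalar n (Units.mk0 _ hne)⁻¹ * g) :
      Matrix n n ℚ_[p]) k l = ((g : Matrix n n ℚ_[p]) i j)⁻¹ * (g : Matrix n n ℚ_[p]) k l := by
    simp only [Units.val_mul, Matrix.GeneralLinearGroup.coe_scalar, Matrix.scalar_apply,
      Matrix.diagonal_mul, Units.val_inv_eq_inv_val, Units.val_mk0]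
  refine ⟨(Units.mk0 _ hne)⁻¹, i, j, fun k l => ?_, ?_⟩
  · rw [hcoe, norm_mul, norm_inv, inv_mul_le_one₀ (norm_pos_iff.mpr hne)]
    exact hmax (k, l)
  · rw [hcoe, inv_mul_cancel₀ hne, norm_one]

noncomputable def hermiteGL (p : ℕ) [Fact p.Prime] (a b j : ℕ) : GL (Fin 2) ℚ_[p] :=
  .mkOfDetNeZero !![(p : ℚ_[p]) ^ a, 0; (j : ℚ_[p]), (p : ℚ_[p]) ^ b]
    (by simp [Matrix.det_fin_two, (Fact.out : p.Prime).ne_zero])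

open Matrix integralGL in
theorem exists_mem_integralGL_mul_row_zero_eq (h : GL (Fin 2) ℚ_[p])
    (hh : (h : Matrix (Fin 2) (Fin 2) ℚ_[p]).IsPadicIntegral) :
    ∃ k ∈ integralGL p (Fin 2), ∃ a : ℕ, (h * k) 0 0 = (p : ℚ_[p]) ^ a ∧ (h * k) 0 1 = 0 := by
  wlog hle : ‖h 0 1‖ ≤ ‖h 0 0‖ generalizing h
  · obtain ⟨w, hw, hwc⟩ := exists_coe_eq (p := p) (κ := !![0, 1; 1, 0])
      (isPadicIntegral_fin_two_iff.mpr (by simp)) (by simp [det_fin_two])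
    obtain ⟨k, hk, a, hk00, hk01⟩ := this (h * w) (hh.mul (mem_iff.mp hw).1)
      (by simp [hwc, mul_apply, Fin.sum_univ_two]; linarith)
    exact ⟨w * k, mul_mem hw hk, a, by rwa [← mul_assoc], by rwa [← mul_assoc]⟩
  have hA : h 0 0 ≠ 0 := by
    intro hA
    have hB : h 0 1 = 0 := norm_le_zero_iff.mp (by simpa [hA] using hle)
    simpa [det_fin_two, hA, hB] using h.det_ne_zero
  obtain ⟨a, ha⟩ := Padic.exists_norm_eq_zpow_neg_natCast hA (hh 0 0)
  obtain ⟨k, hk, hkc⟩ := exists_coe_eq (κ := !![(p : ℚ_[p]) ^ a / h 0 0, -(h 0 1 / h 0 0); 0, 1])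
    (isPadicIntegral_fin_two_iff.mpr ⟨(Padic.norm_p_pow_div ha).le,
      by rw [norm_neg, norm_div]; exact div_le_one_of_le₀ hle (norm_nonneg _), by simp, by simp⟩)
    (by simpa [det_fin_two] using Padic.norm_p_pow_div ha)
  refine ⟨k, hk, a, ?_, ?_⟩ <;>
    simp [Units.val_mul, hkc, mul_apply, Fin.sum_univ_two, mul_div_cancel₀ _ hA]

open Matrix integralGL in
theorem exists_mem_integralGL_mul_eq_hermiteGL (h : GL (Fin 2) ℚ_[p])
    (hh : (h : Matrix (Fin 2) (Fin 2) ℚ_[p]).IsPadicIntegral) {a n : ℕ}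
    (h00 : h 0 0 = (p : ℚ_[p]) ^ a) (h01 : h 0 1 = 0)
    (hdet : ‖(h : Matrix (Fin 2) (Fin 2) ℚ_[p]).det‖ = (p : ℝ) ^ (-(n : ℤ))) :
    a ≤ n ∧ ∃ j < p ^ (n - a), ∃ k ∈ integralGL p (Fin 2), h * k = hermiteGL p a (n - a) j := by
  have hp : (1 : ℝ) < p := by exact_mod_cast (Fact.out : p.Prime).one_lt
  have hD : ‖h 1 1‖ = (p : ℝ) ^ ((a : ℤ) - n) := by
    rw [det_fin_two, h00, h01, zero_mul, sub_zero, norm_mul, Padic.norm_p_pow] at hdet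
    rw [sub_eq_neg_add, zpow_add₀ (by positivity), ← hdet, _root_.zpow_neg]
    field_simp
  have han : a ≤ n := by
    have := (zpow_le_one_iff_right₀ hp).mp (hD ▸ hh 1 1)
    omega
  have hD' : ‖h 1 1‖ = (p : ℝ) ^ (-((n - a : ℕ) : ℤ)) := by rw [hD]; congr 1; omega
  have hD0 : 0 < ‖h 1 1‖ := hD ▸ zpow_pos (by positivity) _
  obtain ⟨j, hj, hjC⟩ := Padic.exists_lt_pow_norm_natCast_sub_le (hh 1 0) (n - a)
  obtain ⟨k, hk, hkc⟩ := exists_coe_eq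
    (κ := !![1, 0; ((j : ℚ_[p]) - h 1 0) / h 1 1, (p : ℚ_[p]) ^ (n - a) / h 1 1])
    (isPadicIntegral_fin_two_iff.mpr ⟨by simp, by simp,
      by rw [norm_div, div_le_one hD0, hD']; exact hjC, (Padic.norm_p_pow_div hD').le⟩)
    (by simpa [det_fin_two] using Padic.norm_p_pow_div hD')
  refine ⟨han, j, hj, k, hk, Units.ext ?_⟩
  have hD0' : h 1 1 ≠ 0 := norm_pos_iff.mp hD0
  ext r s
  fin_cases r <;> fin_cases s <;>
    simp [hermiteGL, hkc, mul_apply, Fin.sum_univ_two, h00, h01, mul_div_cancel₀ _ hD0']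

open Matrix integralGL in
theorem exists_eq_hermiteGL_mul (h : GL (Fin 2) ℚ_[p])
    (hh : (h : Matrix (Fin 2) (Fin 2) ℚ_[p]).IsPadicIntegral) {n : ℕ}
    (hdet : ‖(h : Matrix (Fin 2) (Fin 2) ℚ_[p]).det‖ = (p : ℝ) ^ (-(n : ℤ))) :
    ∃ a ≤ n, ∃ j < p ^ (n - a), ∃ k ∈ integralGL p (Fin 2), h = hermiteGL p a (n - a) j * k := by
  obtain ⟨k₁, hk₁, a, h00, h01⟩ := exists_mem_integralGL_mul_row_zero_eq h hh
  have hdet₁ : ‖(↑(h * k₁) : Matrix (Fin 2) (Fin 2) ℚ_[p]).det‖ = (p : ℝ) ^ (-(n : ℤ)) := by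
    rw [Units.val_mul, det_mul, norm_mul, norm_det_eq_one hk₁, mul_one, hdet]
  obtain ⟨han, j, hj, k₂, hk₂, hk⟩ :=
    exists_mem_integralGL_mul_eq_hermiteGL (h * k₁) (hh.mul (mem_iff.mp hk₁).1) h00 h01 hdet₁
  exact ⟨a, han, j, hj, (k₁ * k₂)⁻¹, inv_mem (mul_mem hk₁ hk₂), by
    rw [← hk, mul_assoc h, mul_inv_cancel_right]⟩

def hermiteCover (p : ℕ) [Fact p.Prime] (n : ℕ) :
    Set (GL (Fin 2) ℚ_[p] ⧸ Subgroup.center (GL (Fin 2) ℚ_[p])) :=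
  ⋃ a ∈ Finset.range (n + 1), ⋃ j ∈ Finset.range (p ^ (n - a)),
    (hermiteGL p a (n - a) j : GL (Fin 2) ℚ_[p] ⧸ Subgroup.center (GL (Fin 2) ℚ_[p])) •
      (QuotientGroup.mk '' (integralGL p (Fin 2) : Set (GL (Fin 2) ℚ_[p])))

theorem exists_mem_hermiteCover (g : GL (Fin 2) ℚ_[p]) :
    ∃ h : GL (Fin 2) ℚ_[p],
      (h : GL (Fin 2) ℚ_[p] ⧸ Subgroup.center (GL (Fin 2) ℚ_[p])) = g ∧
      ∃ n : ℕ, (g : GL (Fin 2) ℚ_[p] ⧸ Subgroup.center (GL (Fin 2) ℚ_[p])) ∈ hermiteCover p n ∧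
        (p : ℝ) ^ n ≤ adPadicOpNorm p h := by
  obtain ⟨u, i, j, hint, hij⟩ := exists_scalar_mul_isPadicIntegral g
  set h := Matrix.GeneralLinearGroup.scalar (Fin 2) u * g
  have hhg : (h : GL (Fin 2) ℚ_[p] ⧸ Subgroup.center (GL (Fin 2) ℚ_[p])) = g := by
    rw [QuotientGroup.mk_mul, (QuotientGroup.eq_one_iff _).mpr
      (Subgroup.mem_center_iff.mpr fun A => (Matrix.GeneralLinearGroup.scalar_commute u A).symm),
      one_mul]
  obtain ⟨n, hn⟩ := Padic.exists_norm_eq_zpow_neg_natCast h.det_ne_zero hint.norm_det_le_one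
  obtain ⟨a, ha, j', hj', k, hk, hhk⟩ := exists_eq_hermiteGL_mul h hint hn
  refine ⟨h, hhg, n, ?_, ?_⟩
  · rw [← hhg, hhk, QuotientGroup.mk_mul]
    exact Set.mem_iUnion₂.mpr ⟨a, Finset.mem_range.mpr (by omega), Set.mem_iUnion₂.mpr
      ⟨j', Finset.mem_range.mpr hj', Set.smul_mem_smul_set (Set.mem_image_of_mem _ hk)⟩⟩
  · have := sq_norm_apply_div_norm_det_le_adPadicOpNorm h i j
    rwa [hij, hn, one_pow, one_div, ← zpow_neg, neg_neg, zpow_natCast] at this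

theorem measure_hermiteCover_le
    [MeasurableSpace (GL (Fin 2) ℚ_[p] ⧸ Subgroup.center (GL (Fin 2) ℚ_[p]))]
    (μ : Measure (GL (Fin 2) ℚ_[p] ⧸ Subgroup.center (GL (Fin 2) ℚ_[p])))
    [μ.IsMulLeftInvariant]
    (hμ : μ (QuotientGroup.mk '' (integralGL p (Fin 2) : Set (GL (Fin 2) ℚ_[p]))) = 1) (n : ℕ) :
    μ (hermiteCover p n) ≤ (∑ a ∈ Finset.range (n + 1), p ^ (n - a) : ℕ) := by
  calc μ (hermiteCover p n)
      ≤ ∑ a ∈ Finset.range (n + 1), ∑ j ∈ Finset.range (p ^ (n - a)),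
          μ ((hermiteGL p a (n - a) j : GL (Fin 2) ℚ_[p] ⧸ Subgroup.center (GL (Fin 2) ℚ_[p])) •
            (QuotientGroup.mk '' (integralGL p (Fin 2) : Set (GL (Fin 2) ℚ_[p])))) :=
        (measure_biUnion_finset_le _ _).trans
          (Finset.sum_le_sum fun a _ => measure_biUnion_finset_le _ _)
    _ = _ := by simp [measure_smul, hμ]

theorem stmt11_general (p : ℕ) [Fact p.Prime]
    [MeasurableSpace (GL (Fin 2) ℚ_[p] ⧸ Subgroup.center (GL (Fin 2) ℚ_[p]))]
    (μ : Measure (GL (Fin 2) ℚ_[p] ⧸ Subgroup.center (GL (Fin 2) ℚ_[p])))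
    [μ.IsHaarMeasure]
    (hμnorm : μ (QuotientGroup.mk '' {g : GL (Fin 2) ℚ_[p] |
        ∀ i j : Fin 2, ‖(↑g : Matrix (Fin 2) (Fin 2) ℚ_[p]) i j‖ ≤ 1 ∧
          ‖(↑(g⁻¹) : Matrix (Fin 2) (Fin 2) ℚ_[p]) i j‖ ≤ 1}) = 1)
    (N : (GL (Fin 2) ℚ_[p] ⧸ Subgroup.center (GL (Fin 2) ℚ_[p]))  → ℝ)
    (hN : ∀ g : GL (Fin 2) ℚ_[p],
      N (QuotientGroup.mk g) = max (@Norm.norm _ ContinuousLinearMap.hasOpNorm (adPadic p g))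
        (@Norm.norm _ ContinuousLinearMap.hasOpNorm (adPadic p g⁻¹)))
    (σ : ℝ) (hσ : 1 < σ) :
    ∫⁻ x, ENNReal.ofReal (N x ^ (-σ)) ∂μ
      ≤ ENNReal.ofReal ((1 + (p : ℝ) ^ (2 - σ)) / (1 - (p : ℝ) ^ (1 - σ))) := by
  have hp : 2 ≤ p := (Fact.out : p.Prime).two_le
  refine (lintegral_le_tsum_mul_measure μ (s := hermiteCover p)
    (c := fun n => ENNReal.ofReal (((p : ℝ) ^ n) ^ (-σ))) fun x => ?_).trans
    (tsum_ofReal_rpow_neg_mul_le (Fact.out : p.Prime).one_lt hσ ?_ fun n => ?_)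
  · obtain ⟨g, rfl⟩ := QuotientGroup.mk_surjective x
    obtain ⟨h, hhg, n, hmem, hle⟩ := exists_mem_hermiteCover g
    refine ⟨n, hmem, ENNReal.ofReal_le_ofReal
      (Real.rpow_le_rpow_of_nonpos (by positivity) ?_ (by linarith))⟩
    rw [← hhg, hN]
    exact hle.trans (le_max_left _ _)
  · simpa using measure_hermiteCover_le μ hμnorm 0
  · refine (measure_hermiteCover_le μ hμnorm (n + 1)).trans ?_
    exact_mod_cast (Nat.sum_range_succ_pow_sub_lt hp (n + 1)).le

/-- Let `G = GL₂(ℚ_p)/Z` be the quotient of `GL₂(ℚ_p)` by its center, `μ` the Haar measure on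
`G` normalized so that the compact open image of `GL₂(ℤ_p)` in `G` has measure `1`, and let
`N` be the function on `G` induced by `Ñ(g) = max(‖Ad(g)‖, ‖Ad(g⁻¹)‖)` (operator norms on
`M₂(ℚ_p)` with the supremum norm of the entries).  Then for every real `σ > 1`,
`∫_G N(g)^{-σ} dμ(g) ≤ (1 + p^{2-σ})/(1 - p^{1-σ})`. -/
theorem stmt11 (p : ℕ) [Fact p.Prime]
    [MeasurableSpace (GL (Fin 2) ℚ_[p] ⧸ Subgroup.center (GL (Fin 2) ℚ_[p]))]
    [BorelSpace (GL (Fin 2) ℚ_[p] ⧸ Subgroup.center (GL (Fin 2) ℚ_[p]))]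
    (μ : Measure (GL (Fin 2) ℚ_[p] ⧸ Subgroup.center (GL (Fin 2) ℚ_[p])))
    [μ.IsHaarMeasure]
    (hμnorm : μ (QuotientGroup.mk '' {g : GL (Fin 2) ℚ_[p] |
        ∀ i j : Fin 2, ‖(↑g : Matrix (Fin 2) (Fin 2) ℚ_[p]) i j‖ ≤ 1 ∧
          ‖(↑(g⁻¹) : Matrix (Fin 2) (Fin 2) ℚ_[p]) i j‖ ≤ 1}) = 1)
    (N : (GL (Fin 2) ℚ_[p] ⧸ Subgroup.center (GL (Fin 2) ℚ_[p]))  → ℝ)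
    (hN : ∀ g : GL (Fin 2) ℚ_[p],
      N (QuotientGroup.mk g) = max (@Norm.norm _ ContinuousLinearMap.hasOpNorm (adPadic p g))
        (@Norm.norm _ ContinuousLinearMap.hasOpNorm (adPadic p g⁻¹)))
    (σ : ℝ) (hσ : 1 < σ) :
    ∫⁻ x, ENNReal.ofReal (N x ^ (-σ)) ∂μ
      ≤ ENNReal.ofReal ((1 + (p : ℝ) ^ (2 - σ)) / (1 - (p : ℝ) ^ (1 - σ))) :=
  stmt11_general p μ hμnorm N hN σ hσ
end
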